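/- arXiv:2205.15556 — 5 statements merged into one kernel-verified Lean document; each statement's English description precedes it below -/
import Mathlib

section
/- Under the queue dynamics and the availability constraint, with Q^(l)(0) ≥ 0 for all l, the following finite-horizon counting bound holds for every lifetime l ∈ {1,…,L} and every horizon T ≥ 1: ∑_{t=0}^{T−1} xout^(≥l)(t) ≤ ∑_{m=l}^{L} Q^(m)(0) + ∑_{t=0}^{T−1} ( xin^(≥l+1)(t) + a^(≥l)(t) ); that is, the total amount of packets transmitted with current lifetime at least l over any horizon never exceeds the initial backlog of such packets plus the total receptions with lifetime at least l+1 plus the total exogenous arrivals with lifetime at least l. -/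
/-!
Summing the dynamics over lifetimes `m ≥ l` gives
`Q^(≥l)(t+1) = Q^(≥l+1)(t) - xout^(≥l+1)(t) + xin^(≥l+1)(t) + a^(≥l)(t)`, and since
`Q^(l)(t) - xout^(l)(t) ≥ 0` this yields the one-step inequality
`Q^(≥l)(t+1) + xout^(≥l)(t) ≤ Q^(≥l)(t) + xin^(≥l+1)(t) + a^(≥l)(t)`.
Telescoping over `t < T` bounds the total transmissions by the right-hand side minus
`Q^(≥l)(T)`, and every backlog after the first slot is nonnegative, because it is made of
untransmitted packets, receptions and arrivals.
-/

open Finset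

theorem Finset.sum_Icc_add' {M : Type*} [AddCommMonoid M] (f : ℕ → M) (a b c : ℕ) :
    ∑ m ∈ Icc a b, f (m + c) = ∑ m ∈ Icc (a + c) (b + c), f m := by
  rw [← map_add_right_Icc, sum_map]
  rfl

theorem sum_range_add_le_of_forall_add_le {M : Type*} [AddCommMonoid M] [PartialOrder M]
    [IsOrderedAddMonoid M] {u x y : ℕ → M} (h : ∀ t, u (t + 1) + x t ≤ u t + y t) (T : ℕ) :
    ∑ t ∈ range T, x t + u T ≤ u 0 + ∑ t ∈ range T, y t := by
  induction T with
  | zero => simp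
  | succ T ih =>
    calc ∑ t ∈ range (T + 1), x t + u (T + 1)
        = ∑ t ∈ range T, x t + (u (T + 1) + x T) := by rw [sum_range_succ]; abel
      _ ≤ ∑ t ∈ range T, x t + (u T + y T) := add_le_add_right (h T) _
      _ = (∑ t ∈ range T, x t + u T) + y T := by abel
      _ ≤ (u 0 + ∑ t ∈ range T, y t) + y T := by gcongr
      _ = u 0 + ∑ t ∈ range (T + 1), y t := by rw [sum_range_succ, add_assoc]

section QueueDynamics

variable {L : ℕ} {Q a xin xout : ℕ → ℕ → ℝ}

theorem queue_succ_nonneg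
    (ha : ∀ t, ∀ l ∈ Icc 1 L, 0 ≤ a t l)
    (hxin : ∀ t, ∀ l ∈ Icc 1 L, 0 ≤ xin t l)
    (hQtop : ∀ t, Q t (L + 1) = 0)
    (hxintop : ∀ t, xin t (L + 1) = 0)
    (hxouttop : ∀ t, xout t (L + 1) = 0)
    (hdyn : ∀ t, ∀ l ∈ Icc 1 L,
      Q (t + 1) l = Q t (l + 1) - xout t (l + 1) + xin t (l + 1) + a t l)
    (havail : ∀ t, ∀ l ∈ Icc 1 L, xout t l ≤ Q t l) (t : ℕ) :
    ∀ l ∈ Icc 1 L, 0 ≤ Q (t + 1) l := by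
  intro l hl
  have hlL := (mem_Icc.1 hl).2
  have hnext : xout t (l + 1) ≤ Q t (l + 1) ∧ 0 ≤ xin t (l + 1) := by
    rcases hlL.lt_or_eq with hlt | rfl
    · exact ⟨havail t (l + 1) (mem_Icc.2 ⟨by omega, hlt⟩),
        hxin t (l + 1) (mem_Icc.2 ⟨by omega, hlt⟩)⟩
    · simp [hQtop, hxintop, hxouttop]
  rw [hdyn t l hl]
  linarith [ha t l hl]

theorem sum_Icc_queue_succ
    (hQtop : ∀ t, Q t (L + 1) = 0)
    (hxintop : ∀ t, xin t (L + 1) = 0)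
    (hxouttop : ∀ t, xout t (L + 1) = 0)
    (hdyn : ∀ t, ∀ l ∈ Icc 1 L,
      Q (t + 1) l = Q t (l + 1) - xout t (l + 1) + xin t (l + 1) + a t l)
    (t : ℕ) {l : ℕ} (hl : l ∈ Icc 1 L) :
    ∑ m ∈ Icc l L, Q (t + 1) m =
      ∑ m ∈ Icc (l + 1) L, (Q t m - xout t m + xin t m) + ∑ m ∈ Icc l L, a t m := by
  obtain ⟨hl1, hlL⟩ := mem_Icc.1 hl
  rw [sum_congr rfl fun m hm => hdyn t m (Icc_subset_Icc_left hl1 hm), sum_add_distrib,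
    sum_Icc_add' (fun m => Q t m - xout t m + xin t m), sum_Icc_succ_top (by omega)]
  simp [hQtop, hxintop, hxouttop]

theorem sum_Icc_queue_succ_add_sum_Icc_xout_le
    (hQtop : ∀ t, Q t (L + 1) = 0)
    (hxintop : ∀ t, xin t (L + 1) = 0)
    (hxouttop : ∀ t, xout t (L + 1) = 0)
    (hdyn : ∀ t, ∀ l ∈ Icc 1 L,
      Q (t + 1) l = Q t (l + 1) - xout t (l + 1) + xin t (l + 1) + a t l)
    (havail : ∀ t, ∀ l ∈ Icc 1 L, xout t l ≤ Q t l) (t : ℕ) {l : ℕ} (hl : l ∈ Icc 1 L) :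
    ∑ m ∈ Icc l L, Q (t + 1) m + ∑ m ∈ Icc l L, xout t m ≤
      ∑ m ∈ Icc l L, Q t m + (∑ m ∈ Icc (l + 1) L, xin t m + ∑ m ∈ Icc l L, a t m) := by
  have hlL := (mem_Icc.1 hl).2
  rw [sum_Icc_queue_succ hQtop hxintop hxouttop hdyn t hl, sum_add_distrib, sum_sub_distrib,
    ← add_sum_Ioc_eq_sum_Icc (f := Q t) hlL, ← add_sum_Ioc_eq_sum_Icc (f := xout t) hlL,
    ← Icc_add_one_left_eq_Ioc]
  linarith [havail t l hl]

end QueueDynamics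

theorem stmt1_general
    (L : ℕ)
    (Q a xin xout : ℕ → ℕ → ℝ)
    (ha : ∀ t, ∀ l ∈ Icc 1 L, 0 ≤ a t l)
    (hxin : ∀ t, ∀ l ∈ Icc 1 L, 0 ≤ xin t l)
    (hQtop : ∀ t, Q t (L + 1) = 0)
    (hxintop : ∀ t, xin t (L + 1) = 0)
    (hxouttop : ∀ t, xout t (L + 1) = 0)
    (hdyn : ∀ t, ∀ l ∈ Icc 1 L,
      Q (t + 1) l = Q t (l + 1) - xout t (l + 1) + xin t (l + 1) + a t l)
    (havail : ∀ t, ∀ l ∈ Icc 1 L, xout t l ≤ Q t l) :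
    ∀ l ∈ Icc 1 L, ∀ T : ℕ, 1 ≤ T →
      ∑ t ∈ range T, ∑ m ∈ Icc l L, xout t m ≤
        (∑ m ∈ Icc l L, Q 0 m) +
          ∑ t ∈ range T, ((∑ m ∈ Icc (l + 1) L, xin t m) + ∑ m ∈ Icc l L, a t m) := by
  intro l hl T hT
  obtain ⟨T, rfl⟩ := Nat.exists_eq_add_of_le' hT
  have htelescope := sum_range_add_le_of_forall_add_le
    (u := fun t => ∑ m ∈ Icc l L, Q t m)
    (fun t => sum_Icc_queue_succ_add_sum_Icc_xout_le hQtop hxintop hxouttop hdyn havail t hl)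
    (T + 1)
  have hfinal : 0 ≤ ∑ m ∈ Icc l L, Q (T + 1) m := sum_nonneg fun m hm =>
    queue_succ_nonneg ha hxin hQtop hxintop hxouttop hdyn havail T m
      (Icc_subset_Icc_left (mem_Icc.1 hl).1 hm)
  linarith

/-- Under the lifetime-driven queue dynamics and the availability
constraint, the total outgoing traffic with current lifetime at least `l` over any
horizon `T ≥ 1` is bounded by the initial backlog of such packets, plus total
receptions with lifetime at least `l+1`, plus total exogenous arrivals with
lifetime at least `l`. -/
theorem stmt1
    (L : ℕ) (hL : 1 ≤ L)
    (Q a xin xout : ℕ → ℕ → ℝ)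
    (ha : ∀ t, ∀ l ∈ Icc 1 L, 0 ≤ a t l)
    (hxin : ∀ t, ∀ l ∈ Icc 1 L, 0 ≤ xin t l)
    (hxout : ∀ t, ∀ l ∈ Icc 1 L, 0 ≤ xout t l)
    (hQtop : ∀ t, Q t (L + 1) = 0)
    (hxintop : ∀ t, xin t (L + 1) = 0)
    (hxouttop : ∀ t, xout t (L + 1) = 0)
    (hdyn : ∀ t, ∀ l ∈ Icc 1 L,
      Q (t + 1) l = Q t (l + 1) - xout t (l + 1) + xin t (l + 1) + a t l)
    (havail : ∀ t, ∀ l ∈ Icc 1 L, xout t l ≤ Q t l)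
    (hinit : ∀ l ∈ Icc 1 L, 0 ≤ Q 0 l) :
    ∀ l ∈ Icc 1 L, ∀ T : ℕ, 1 ≤ T →
      ∑ t ∈ range T, ∑ m ∈ Icc l L, xout t m ≤
        (∑ m ∈ Icc l L, Q 0 m) +
          ∑ t ∈ range T, ((∑ m ∈ Icc (l + 1) L, xin t m) + ∑ m ∈ Icc l L, a t m) :=
  stmt1_general L Q a xin xout ha hxin hQtop hxintop hxouttop hdyn havail
end

section
/- (First implication of Proposition 1.) Under the queue dynamics and the availability constraint, with Q^(l)(0) ≥ 0 for all l, suppose the long-run arrival averages exist: (1/T) ∑_{t=0}^{T−1} a^(≥l)(t) → λ^(≥l) as T → ∞. Then for every lifetime l ∈ {1,…,L}: limsup_{T→∞} (1/T) ∑_{t=0}^{T−1} ( xout^(≥l)(t) − xin^(≥l+1)(t) ) ≤ λ^(≥l). In particular, every availability-respecting policy satisfies the relaxed lifetime-driven causality constraint of the virtual network. -/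
open Finset Filter Topology

/-! The backlog `S t = Q^(≥l)(t)` of packets with lifetime at least `l` is a nonnegative potential:
the dynamics give `S (t+1) = Q^(≥l+1)(t) - xout^(≥l+1)(t) + xin^(≥l+1)(t) + a^(≥l)(t)`, and
availability `xout^(l)(t) ≤ Q^(l)(t)` turns this into
`xout^(≥l)(t) - xin^(≥l+1)(t) ≤ a^(≥l)(t) + S t - S (t+1)`. Summing telescopes to a bound by
the cumulative arrivals plus `S 0`, which vanishes after dividing by `T`. -/

lemma Real.limsup_le_of_eventually_le_of_tendsto {ι : Type*} {F : Filter ι} {f g : ι → ℝ}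
    {c : ℝ} (hc : 0 ≤ c) (hfg : ∀ᶠ i in F, f i ≤ g i) (hg : Tendsto g F (𝓝 c)) :
    limsup f F ≤ c := by
  -- `hc` handles `f` unbounded below, where `limsup f F` is the junk value `0`.
  by_cases hf : F.IsCoboundedUnder (· ≤ ·) f
  · refine le_of_forall_pos_le_add fun ε hε => limsup_le_of_le hf ?_
    filter_upwards [hfg, hg.eventually (gt_mem_nhds (lt_add_of_pos_right c hε))] with i h1 h2
    exact h1.trans h2.le
  · rw [Real.limsup_of_not_isCoboundedUnder hf]
    exact hc

lemma sum_range_le_add_sub_of_le_add_sub_succ {u a S : ℕ → ℝ}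
    (h : ∀ t, u t ≤ a t + (S t - S (t + 1))) (T : ℕ) :
    ∑ t ∈ range T, u t ≤ ∑ t ∈ range T, a t + (S 0 - S T) := by
  calc ∑ t ∈ range T, u t ≤ ∑ t ∈ range T, (a t + (S t - S (t + 1))) := sum_le_sum fun t _ => h t
    _ = ∑ t ∈ range T, a t + (S 0 - S T) := by rw [sum_add_distrib, sum_range_sub']

lemma limsup_avg_le_of_le_add_sub_succ {u a S : ℕ → ℝ} {c : ℝ} (ha : ∀ t, 0 ≤ a t)
    (hS : ∀ t, 0 ≤ S t) (h : ∀ t, u t ≤ a t + (S t - S (t + 1)))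
    (hlim : Tendsto (fun T : ℕ => (∑ t ∈ range T, a t) / T) atTop (𝓝 c)) :
    limsup (fun T : ℕ => (∑ t ∈ range T, u t) / T) atTop ≤ c := by
  have hc : 0 ≤ c :=
    ge_of_tendsto' hlim fun T => div_nonneg (sum_nonneg fun t _ => ha t) T.cast_nonneg
  have hbound : Tendsto (fun T : ℕ => (∑ t ∈ range T, a t + S 0) / T) atTop (𝓝 c) := by
    simpa [add_div] using hlim.add (tendsto_const_div_atTop_nhds_zero_nat (S 0))
  refine Real.limsup_le_of_eventually_le_of_tendsto hc (Eventually.of_forall fun T => ?_) hbound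
  gcongr
  linarith [sum_range_le_add_sub_of_le_add_sub_succ h T, hS T]

lemma sum_Icc_add_one_eq_of_top_eq_zero {M : Type*} [AddCommMonoid M] {l L : ℕ} (hl : l ≤ L)
    (h : ℕ → M) (htop : h (L + 1) = 0) :
    ∑ m ∈ Icc l L, h (m + 1) = ∑ m ∈ Icc (l + 1) L, h m := by
  calc ∑ m ∈ Icc l L, h (m + 1) = ∑ m ∈ Icc (l + 1) (L + 1), h m := by
        rw [← map_add_right_Icc, sum_map]
        rfl
    _ = ∑ m ∈ Icc (l + 1) L, h m := by rw [sum_Icc_succ_top (by omega), htop, add_zero]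

section LifetimeQueue

variable {L : ℕ} {Q a xin xout : ℕ → ℕ → ℝ}

lemma queue_nonneg (ha : ∀ t, ∀ l ∈ Icc 1 L, 0 ≤ a t l)
    (hxin : ∀ t, ∀ l ∈ Icc 1 L, 0 ≤ xin t l)
    (hQtop : ∀ t, Q t (L + 1) = 0) (hxintop : ∀ t, xin t (L + 1) = 0)
    (hxouttop : ∀ t, xout t (L + 1) = 0)
    (hdyn : ∀ t, ∀ l ∈ Icc 1 L,
      Q (t + 1) l = Q t (l + 1) - xout t (l + 1) + xin t (l + 1) + a t l)
    (havail : ∀ t, ∀ l ∈ Icc 1 L, xout t l ≤ Q t l)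
    (hinit : ∀ l ∈ Icc 1 L, 0 ≤ Q 0 l) :
    ∀ t, ∀ l ∈ Icc 1 L, 0 ≤ Q t l := by
  intro t
  induction t with
  | zero => exact hinit
  | succ t ih =>
    intro l hl
    have hal := ha t l hl
    rw [hdyn t l hl]
    obtain ⟨hl1, hlL⟩ := mem_Icc.mp hl
    rcases hlL.eq_or_lt with rfl | hlt
    · rw [hQtop, hxouttop, hxintop]
      linarith
    · have hl' : l + 1 ∈ Icc 1 L := mem_Icc.mpr ⟨by omega, hlt⟩
      linarith [havail t (l + 1) hl', hxin t (l + 1) hl']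

lemma tail_backlog_succ {l : ℕ} (hl : l ∈ Icc 1 L)
    (hQtop : ∀ t, Q t (L + 1) = 0) (hxintop : ∀ t, xin t (L + 1) = 0)
    (hxouttop : ∀ t, xout t (L + 1) = 0)
    (hdyn : ∀ t, ∀ l ∈ Icc 1 L,
      Q (t + 1) l = Q t (l + 1) - xout t (l + 1) + xin t (l + 1) + a t l) (t : ℕ) :
    ∑ m ∈ Icc l L, Q (t + 1) m =
      ∑ m ∈ Icc (l + 1) L, (Q t m - xout t m + xin t m) + ∑ m ∈ Icc l L, a t m := by
  rw [sum_congr rfl fun m hm => hdyn t m (Icc_subset_Icc_left (mem_Icc.mp hl).1 hm),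
    sum_add_distrib]
  congr 1
  exact sum_Icc_add_one_eq_of_top_eq_zero (mem_Icc.mp hl).2
    (fun m => Q t m - xout t m + xin t m) (by simp [hQtop, hxintop, hxouttop])

lemma tail_departures_le {l : ℕ} (hl : l ∈ Icc 1 L)
    (hQtop : ∀ t, Q t (L + 1) = 0) (hxintop : ∀ t, xin t (L + 1) = 0)
    (hxouttop : ∀ t, xout t (L + 1) = 0)
    (hdyn : ∀ t, ∀ l ∈ Icc 1 L,
      Q (t + 1) l = Q t (l + 1) - xout t (l + 1) + xin t (l + 1) + a t l)
    (havail : ∀ t, ∀ l ∈ Icc 1 L, xout t l ≤ Q t l) (t : ℕ) :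
    (∑ m ∈ Icc l L, xout t m) - ∑ m ∈ Icc (l + 1) L, xin t m ≤
      ∑ m ∈ Icc l L, a t m + (∑ m ∈ Icc l L, Q t m - ∑ m ∈ Icc l L, Q (t + 1) m) := by
  have hlL := (mem_Icc.mp hl).2
  have hQ := add_sum_Ioc_eq_sum_Icc (f := Q t) hlL
  have hxout := add_sum_Ioc_eq_sum_Icc (f := xout t) hlL
  rw [← Icc_add_one_left_eq_Ioc] at hQ hxout
  rw [tail_backlog_succ hl hQtop hxintop hxouttop hdyn, sum_add_distrib, sum_sub_distrib]
  linarith [havail t l hl]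

end LifetimeQueue

theorem stmt2_general
    (L : ℕ)
    (Q a xin xout : ℕ → ℕ → ℝ)
    (lam : ℕ → ℝ)
    (ha : ∀ t, ∀ l ∈ Icc 1 L, 0 ≤ a t l)
    (hxin : ∀ t, ∀ l ∈ Icc 1 L, 0 ≤ xin t l)
    (hQtop : ∀ t, Q t (L + 1) = 0)
    (hxintop : ∀ t, xin t (L + 1) = 0)
    (hxouttop : ∀ t, xout t (L + 1) = 0)
    (hdyn : ∀ t, ∀ l ∈ Icc 1 L,
      Q (t + 1) l = Q t (l + 1) - xout t (l + 1) + xin t (l + 1) + a t l)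
    (havail : ∀ t, ∀ l ∈ Icc 1 L, xout t l ≤ Q t l)
    (hinit : ∀ l ∈ Icc 1 L, 0 ≤ Q 0 l)
    (hconva : ∀ l ∈ Icc 1 L,
      Tendsto (fun T : ℕ => (∑ t ∈ range T, ∑ m ∈ Icc l L, a t m) / T) atTop
        (𝓝 (∑ m ∈ Icc l L, lam m))) :
    ∀ l ∈ Icc 1 L,
      limsup
        (fun T : ℕ =>
          (∑ t ∈ range T,
            ((∑ m ∈ Icc l L, xout t m) - ∑ m ∈ Icc (l + 1) L, xin t m)) / T)
        atTop ≤ ∑ m ∈ Icc l L, lam m := by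
  intro l hl
  have htail : Icc l L ⊆ Icc 1 L := Icc_subset_Icc_left (mem_Icc.mp hl).1
  have hQ := queue_nonneg ha hxin hQtop hxintop hxouttop hdyn havail hinit
  exact limsup_avg_le_of_le_add_sub_succ
    (fun t => sum_nonneg fun m hm => ha t m (htail hm))
    (fun t => sum_nonneg fun m hm => hQ t m (htail hm))
    (tail_departures_le hl hQtop hxintop hxouttop hdyn havail) (hconva l hl)

/-- first implication of Proposition 1: under the lifetime-driven
queue dynamics and the availability constraint, if the long-run arrival averages
exist, then every availability-respecting policy satisfies the relaxed
lifetime-driven causality constraint of the virtual network: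
`limsup_T (1/T) ∑_{t<T} (xout^(≥l)(t) − xin^(≥l+1)(t)) ≤ λ^(≥l)`. -/
theorem stmt2
    (L : ℕ) (hL : 1 ≤ L)
    (Q a xin xout : ℕ → ℕ → ℝ)
    (lam : ℕ → ℝ)
    (ha : ∀ t, ∀ l ∈ Icc 1 L, 0 ≤ a t l)
    (hxin : ∀ t, ∀ l ∈ Icc 1 L, 0 ≤ xin t l)
    (hxout : ∀ t, ∀ l ∈ Icc 1 L, 0 ≤ xout t l)
    (hQtop : ∀ t, Q t (L + 1) = 0)
    (hxintop : ∀ t, xin t (L + 1) = 0)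
    (hxouttop : ∀ t, xout t (L + 1) = 0)
    (hdyn : ∀ t, ∀ l ∈ Icc 1 L,
      Q (t + 1) l = Q t (l + 1) - xout t (l + 1) + xin t (l + 1) + a t l)
    (havail : ∀ t, ∀ l ∈ Icc 1 L, xout t l ≤ Q t l)
    (hinit : ∀ l ∈ Icc 1 L, 0 ≤ Q 0 l)
    (hconva : ∀ l ∈ Icc 1 L,
      Tendsto (fun T : ℕ => (∑ t ∈ range T, ∑ m ∈ Icc l L, a t m) / T) atTop
        (𝓝 (∑ m ∈ Icc l L, lam m))) :
    ∀ l ∈ Icc 1 L,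
      limsup
        (fun T : ℕ =>
          (∑ t ∈ range T,
            ((∑ m ∈ Icc l L, xout t m) - ∑ m ∈ Icc (l + 1) L, xin t m)) / T)
        atTop ≤ ∑ m ∈ Icc l L, lam m :=
  stmt2_general L Q a xin xout lam ha hxin hQtop hxintop hxouttop hdyn havail hinit hconva
end

section
/- (Necessity part of the capacity-region characterization in Proposition 2.) Let G = (V,E) be a finite directed graph, L ≥ 1, and suppose every node i ∈ V runs a queue system over lifetimes {1,…,L} obeying the queue dynamics, nonnegative initial backlogs, and the availability constraint, where for each link (i,j) ∈ E and lifetime l the per-slot flow x_ij^(l)(t) ≥ 0 contributes to xout at node i and to xin at node j. Assume the time averages converge: (1/T) ∑_{t<T} x_ij^(l)(t) → x̄_ij^(l) for all (i,j) ∈ E, l ∈ {1,…,L}, and (1/T) ∑_{t<T} a_i^(l)(t) → λ_i^(l) for all i ∈ V, l ∈ {1,…,L}. Then the limiting flow assignment x̄ satisfies the lifetime-driven generalized flow conservation law: for every node i ∈ V and every lifetime l ∈ {1,…,L}, ∑_{m=l+1}^{L} ∑_{j:(j,i)∈E} x̄_ji^(m) + ∑_{m=l}^{L} λ_i^(m)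 ≥ ∑_{m=l}^{L} ∑_{j:(i,j)∈E} x̄_ij^(m). -/
open Finset Filter Topology

/-!
Fix a node `i` and a lifetime `l` and let `S t = ∑_{m ≥ l} Q_i^(m)(t)`. Summed over `m ≥ l`, the
dynamics move every lifetime down by one, so `S (t + 1)` is `S t - Q_i^(l)(t)`, minus the outflow
of lifetimes `≥ l + 1`, plus the inflow of lifetimes `≥ l + 1` and the arrivals of lifetimes
`≥ l`. Availability bounds the outflow of lifetime `l` by `Q_i^(l)(t)`, hence
`S (t + 1) + (outflow of lifetimes ≥ l) ≤ S t + (inflow of lifetimes ≥ l + 1) + (arrivals)`.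
The same two facts make every queue nonnegative after one slot, so `S ≥ 0`; telescoping, dividing
by `T` and letting `T → ∞` gives the conservation law, since `S 0 / T → 0`.
-/

noncomputable def cesaroAvg (f : ℕ → ℝ) (T : ℕ) : ℝ := (∑ t ∈ range T, f t) / T

lemma cesaroAvg_add (f g : ℕ → ℝ) :
    (cesaroAvg fun t => f t + g t) = cesaroAvg f + cesaroAvg g := by
  ext T
  simp only [cesaroAvg, Pi.add_apply, sum_add_distrib, add_div]

lemma tendsto_cesaroAvg_sum {ι : Type*} (s : Finset ι) {f : ℕ → ι → ℝ} {c : ι → ℝ}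
    (h : ∀ k ∈ s, Tendsto (cesaroAvg fun t => f t k) atTop (𝓝 (c k))) :
    Tendsto (cesaroAvg fun t => ∑ k ∈ s, f t k) atTop (𝓝 (∑ k ∈ s, c k)) := by
  have : (cesaroAvg fun t => ∑ k ∈ s, f t k) =
      fun T => ∑ k ∈ s, cesaroAvg (fun t => f t k) T := by
    ext T
    simp only [cesaroAvg, sum_comm (s := range T), sum_div]
  rw [this]
  exact tendsto_finsetSum s h

lemma le_of_tendsto_cesaroAvg_of_step_le {S u v : ℕ → ℝ} {α β : ℝ} (hS : ∀ t, 0 ≤ S t)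
    (hstep : ∀ t, S (t + 1) + u t ≤ S t + v t)
    (hu : Tendsto (cesaroAvg u) atTop (𝓝 α)) (hv : Tendsto (cesaroAvg v) atTop (𝓝 β)) :
    α ≤ β := by
  have htel : ∀ T, S T + ∑ t ∈ range T, u t ≤ S 0 + ∑ t ∈ range T, v t := by
    intro T
    induction T with
    | zero => simp
    | succ T ih =>
      rw [sum_range_succ, sum_range_succ]
      linarith [hstep T]
  have hbound : ∀ T, cesaroAvg u T ≤ S 0 / T + cesaroAvg v T := fun T => by
    rw [cesaroAvg, cesaroAvg, ← add_div]
    exact div_le_div_of_nonneg_right (by linarith [htel T, hS T]) T.cast_nonneg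
  simpa using le_of_tendsto_of_tendsto' hu
    ((tendsto_const_div_atTop_nhds_zero_nat (S 0)).add hv) hbound

lemma sum_Icc_add_one_of_eq_zero {f : ℕ → ℝ} {l L : ℕ} (h : l ≤ L) (hf : f (L + 1) = 0) :
    ∑ m ∈ Icc l L, f (m + 1) = ∑ m ∈ Icc (l + 1) L, f m := by
  calc ∑ m ∈ Icc l L, f (m + 1) = ∑ m ∈ Icc (l + 1) (L + 1), f m := by
        rw [← map_add_right_Icc, sum_map]
        rfl
    _ = ∑ m ∈ Icc (l + 1) L, f m := by rw [sum_Icc_succ_top (by omega), hf, add_zero]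

lemma sum_Icc_eq_add_sum_Icc_add_one {f : ℕ → ℝ} {l L : ℕ} (h : l ≤ L) :
    ∑ m ∈ Icc l L, f m = f l + ∑ m ∈ Icc (l + 1) L, f m := by
  rw [Icc_add_one_left_eq_Ioc, add_sum_Ioc_eq_sum_Icc h]

section LifetimeQueue

variable {q q' o n a : ℕ → ℝ} {L : ℕ}

lemma queue_nonneg_of_dynamics
    (hdyn : ∀ m ∈ Icc 1 L, q' m = q (m + 1) - o (m + 1) + n (m + 1) + a m)
    (hq : q (L + 1) = 0) (ho : o (L + 1) = 0) (hn : n (L + 1) = 0)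
    (havail : ∀ m ∈ Icc 1 L, o m ≤ q m) (hn_nonneg : ∀ m ∈ Icc 1 L, 0 ≤ n m)
    (ha : ∀ m ∈ Icc 1 L, 0 ≤ a m) :
    ∀ m ∈ Icc 1 L, 0 ≤ q' m := by
  intro m hm
  have hm' : m + 1 = L + 1 ∨ m + 1 ∈ Icc 1 L := by
    rw [mem_Icc] at hm ⊢
    omega
  rw [hdyn m hm]
  rcases hm' with htop | hmem
  · rw [htop, hq, ho, hn]
    linarith [ha m hm]
  · linarith [havail _ hmem, hn_nonneg _ hmem, ha m hm]

lemma sum_Icc_queue_step_le {l : ℕ} (hlL : l ≤ L)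
    (hdyn : ∀ m ∈ Icc l L, q' m = q (m + 1) - o (m + 1) + n (m + 1) + a m)
    (hq : q (L + 1) = 0) (ho : o (L + 1) = 0) (hn : n (L + 1) = 0) (havail : o l ≤ q l) :
    ∑ m ∈ Icc l L, q' m + ∑ m ∈ Icc l L, o m
      ≤ ∑ m ∈ Icc l L, q m + (∑ m ∈ Icc (l + 1) L, n m + ∑ m ∈ Icc l L, a m) := by
  rw [sum_congr rfl hdyn]
  simp only [sum_add_distrib, sum_sub_distrib, sum_Icc_add_one_of_eq_zero hlL hq,
    sum_Icc_add_one_of_eq_zero hlL ho, sum_Icc_add_one_of_eq_zero hlL hn,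
    sum_Icc_eq_add_sum_Icc_add_one (f := q) hlL, sum_Icc_eq_add_sum_Icc_add_one (f := o) hlL]
  linarith

end LifetimeQueue

section Flow

variable {V : Type*} [Fintype V] [DecidableEq V] (E : Finset (V × V))

def outflow (y : V → V → ℕ → ℝ) (i : V) (l : ℕ) : ℝ :=
  ∑ j ∈ univ.filter (fun j => (i, j) ∈ E), y i j l

def inflow (y : V → V → ℕ → ℝ) (i : V) (l : ℕ) : ℝ :=
  ∑ j ∈ univ.filter (fun j => (j, i) ∈ E), y j i l

end Flow

theorem stmt3_general {V : Type*} [Fintype V] [DecidableEq V]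
    (E : Finset (V × V)) (L : ℕ)
    (Q : ℕ → V → ℕ → ℝ) (a : ℕ → V → ℕ → ℝ) (x : ℕ → V → V → ℕ → ℝ)
    (ha : ∀ t i, ∀ l ∈ Icc 1 L, 0 ≤ a t i l)
    (hx : ∀ t i j, ∀ l ∈ Icc 1 L, 0 ≤ x t i j l)
    (hQtop : ∀ t i, Q t i (L + 1) = 0)
    (hxtop : ∀ t i j, x t i j (L + 1) = 0)
    (hdyn : ∀ t i, ∀ l ∈ Icc 1 L,
      Q (t + 1) i l = Q t i (l + 1)
        - (∑ j ∈ univ.filter (fun j => (i, j) ∈ E), x t i j (l + 1))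
        + (∑ j ∈ univ.filter (fun j => (j, i) ∈ E), x t j i (l + 1))
        + a t i l)
    (havail : ∀ t i, ∀ l ∈ Icc 1 L,
      ∑ j ∈ univ.filter (fun j => (i, j) ∈ E), x t i j l ≤ Q t i l)
    (hinit : ∀ i, ∀ l ∈ Icc 1 L, 0 ≤ Q 0 i l)
    (xbar : V → V → ℕ → ℝ) (lam : V → ℕ → ℝ)
    (hconvx : ∀ i j, (i, j) ∈ E → ∀ l ∈ Icc 1 L,
      Tendsto (fun T : ℕ => (∑ t ∈ range T, x t i j l) / T) atTop (𝓝 (xbar i j l)))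
    (hconva : ∀ i, ∀ l ∈ Icc 1 L,
      Tendsto (fun T : ℕ => (∑ t ∈ range T, a t i l) / T) atTop (𝓝 (lam i l))) :
    ∀ i, ∀ l ∈ Icc 1 L,
      (∑ m ∈ Icc (l + 1) L, ∑ j ∈ univ.filter (fun j => (j, i) ∈ E), xbar j i m)
          + ∑ m ∈ Icc l L, lam i m
        ≥ ∑ m ∈ Icc l L, ∑ j ∈ univ.filter (fun j => (i, j) ∈ E), xbar i j m := by
  intro i l hl
  obtain ⟨hl1, hlL⟩ := mem_Icc.mp hl
  have hsub : Icc l L ⊆ Icc 1 L := Icc_subset_Icc_left hl1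
  have hsub' : Icc (l + 1) L ⊆ Icc 1 L := Icc_subset_Icc_left (by omega)
  have hout_top : ∀ t, outflow E (x t) i (L + 1) = 0 := fun t =>
    sum_eq_zero fun j _ => hxtop t i j
  have hin_top : ∀ t, inflow E (x t) i (L + 1) = 0 := fun t =>
    sum_eq_zero fun j _ => hxtop t j i
  have hQ : ∀ t, ∀ m ∈ Icc 1 L, 0 ≤ Q t i m := by
    rintro (_ | t)
    · exact hinit i
    · exact queue_nonneg_of_dynamics (o := outflow E (x t) i) (n := inflow E (x t) i)
        (hdyn t i) (hQtop t i) (hout_top t) (hin_top t) (havail t i)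
        (fun m hm => sum_nonneg fun j _ => hx t j i m hm) (ha t i)
  refine le_of_tendsto_cesaroAvg_of_step_le (S := fun t => ∑ m ∈ Icc l L, Q t i m)
    (fun t => sum_nonneg fun m hm => hQ t m (hsub hm))
    (fun t => sum_Icc_queue_step_le (o := outflow E (x t) i) (n := inflow E (x t) i) hlL
      (fun m hm => hdyn t i m (hsub hm)) (hQtop t i) (hout_top t) (hin_top t) (havail t i l hl))
    (tendsto_cesaroAvg_sum _ fun m hm => tendsto_cesaroAvg_sum _ fun j hj =>
      hconvx i j (by simpa using hj) m (hsub hm)) ?_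
  rw [cesaroAvg_add]
  exact (tendsto_cesaroAvg_sum _ fun m hm => tendsto_cesaroAvg_sum _ fun j hj =>
      hconvx j i (by simpa using hj) m (hsub' hm)).add
    (tendsto_cesaroAvg_sum _ fun m hm => hconva i m (hsub hm))

/-- necessity part of Proposition 2: in a finite directed network
where every node runs the lifetime-driven queue dynamics with the availability
constraint, any limiting flow assignment satisfies the lifetime-driven
generalized flow conservation law. -/
theorem stmt3 {V : Type*} [Fintype V] [DecidableEq V]
    (E : Finset (V × V)) (L : ℕ) (hL : 1 ≤ L)
    (Q : ℕ → V → ℕ → ℝ) (a : ℕ → V → ℕ → ℝ) (x : ℕ → V → V → ℕ → ℝ)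
    (ha : ∀ t i, ∀ l ∈ Icc 1 L, 0 ≤ a t i l)
    (hx : ∀ t i j, ∀ l ∈ Icc 1 L, 0 ≤ x t i j l)
    (hQtop : ∀ t i, Q t i (L + 1) = 0)
    (hxtop : ∀ t i j, x t i j (L + 1) = 0)
    (hdyn : ∀ t i, ∀ l ∈ Icc 1 L,
      Q (t + 1) i l = Q t i (l + 1)
        - (∑ j ∈ univ.filter (fun j => (i, j) ∈ E), x t i j (l + 1))
        + (∑ j ∈ univ.filter (fun j => (j, i) ∈ E), x t j i (l + 1))
        + a t i l)
    (havail : ∀ t i, ∀ l ∈ Icc 1 L,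
      ∑ j ∈ univ.filter (fun j => (i, j) ∈ E), x t i j l ≤ Q t i l)
    (hinit : ∀ i, ∀ l ∈ Icc 1 L, 0 ≤ Q 0 i l)
    (xbar : V → V → ℕ → ℝ) (lam : V → ℕ → ℝ)
    (hconvx : ∀ i j, (i, j) ∈ E → ∀ l ∈ Icc 1 L,
      Tendsto (fun T : ℕ => (∑ t ∈ range T, x t i j l) / T) atTop (𝓝 (xbar i j l)))
    (hconva : ∀ i, ∀ l ∈ Icc 1 L,
      Tendsto (fun T : ℕ => (∑ t ∈ range T, a t i l) / T) atTop (𝓝 (lam i l))) :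
    ∀ i, ∀ l ∈ Icc 1 L,
      (∑ m ∈ Icc (l + 1) L, ∑ j ∈ univ.filter (fun j => (j, i) ∈ E), xbar j i m)
          + ∑ m ∈ Icc l L, lam i m
        ≥ ∑ m ∈ Icc l L, ∑ j ∈ univ.filter (fun j => (i, j) ∈ E), xbar i j m :=
  stmt3_general E L Q a x ha hx hQtop hxtop hdyn havail hinit xbar lam hconvx hconva
end

section
/- (Drift-plus-penalty inequality, equations (12)–(14).) In the virtual-network setup, there exists a constant B ≥ 0, depending only on |V|, |E|, L, γ, A_max, and max_{(i,j)∈E} C_ij (and not on t, the flow decisions, or the queue values), such that for every time slot t: L(t+1) − L(t) + V·h(ν(t)) ≤ B + γ A(t) U_d(t) − ∑_{i≠d} ∑_{l=1}^{L} U_i^(l)(t) a_i^(≥l)(t) − ∑_{(i,j)∈E, i≠d} ∑_{l=1}^{L} w_ij^(l)(t) ν_ij^(l)(t). -/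
open Finset Filter Topology

private lemma esum_out {Vt : Type*} [Fintype Vt] [DecidableEq Vt] (E : Finset (Vt × Vt))
    (F : Vt → Vt → ℝ) :
    ∑ p ∈ E, F p.1 p.2 = ∑ i : Vt, ∑ j ∈ univ.filter (fun j => (i, j) ∈ E), F i j := by
  simp only [sum_filter]
  rw [← Finset.sum_product', Finset.univ_product_univ, Finset.sum_ite_mem, Finset.univ_inter]

private lemma esum_in {Vt : Type*} [Fintype Vt] [DecidableEq Vt] (E : Finset (Vt × Vt))
    (F : Vt → Vt → ℝ) :
    ∑ p ∈ E, F p.1 p.2 = ∑ j : Vt, ∑ i ∈ univ.filter (fun i => (i, j) ∈ E), F i j := by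
  simp only [sum_filter]
  rw [Finset.sum_comm, ← Finset.sum_product', Finset.univ_product_univ,
    Finset.sum_ite_mem, Finset.univ_inter]

private lemma swap_sum (L : ℕ) (g f : ℕ → ℝ) :
    ∑ l ∈ Icc 1 L, g l * ∑ m ∈ Icc l L, f m = ∑ m ∈ Icc 1 L, (∑ l ∈ Icc 1 m, g l) * f m := by
  simp_rw [Finset.mul_sum, Finset.sum_mul]
  exact Finset.sum_comm' (by intro l m; simp [mem_Icc]; omega)

private lemma swap_sum' (L : ℕ) (g f : ℕ → ℝ) :
    ∑ l ∈ Icc 1 L, g l * ∑ m ∈ Icc (l + 1) L, f m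
      = ∑ m ∈ Icc 1 L, (∑ l ∈ Icc 1 (m - 1), g l) * f m := by
  simp_rw [Finset.mul_sum, Finset.sum_mul]
  exact Finset.sum_comm' (by intro l m; simp [mem_Icc]; omega)

private lemma sqmax (u x : ℝ) : (max 0 (u + x)) ^ 2 / 2 - u ^ 2 / 2 ≤ u * x + x ^ 2 / 2 := by
  rcases le_or_gt 0 (u + x) with h | h
  · rw [max_eq_right h]; nlinarith
  · rw [max_eq_left h.le]; nlinarith

set_option maxHeartbeats 1000000 in
/-- drift-plus-penalty inequality (equations (12)–(14)). There is a
constant `B ≥ 0`, depending only on the node set, the link set, `L`, `γ`,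
`A_max` and the capacity bound `C_max` (in particular not on `t`, the flow
decisions, the queue values, the control parameter `V`, or the unit costs),
such that for every slot `t`,
`L(t+1) − L(t) + V·h(ν(t)) ≤ B + γA(t)·U_d(t) − ∑_{i≠d}∑_l U_i^(l)(t)·a_i^(≥l)(t)
  − ∑_{(i,j)∈E, i≠d}∑_l w_ij^(l)(t)·ν_ij^(l)(t)`. -/
theorem stmt8 {Vt : Type*} [Fintype Vt] [DecidableEq Vt]
    (d : Vt) (E : Finset (Vt × Vt)) (L : ℕ) (hL : 1 ≤ L)
    (γ Amax Cmax : ℝ) (hγ : γ ∈ Set.Icc (0 : ℝ) 1)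
    (hAmax : 0 ≤ Amax) (hCmax : 0 ≤ Cmax) :
    ∃ B : ℝ, 0 ≤ B ∧
      ∀ (C ecost : Vt → Vt → ℝ) (Vp : ℝ),
        (∀ p ∈ E, 0 ≤ C p.1 p.2 ∧ C p.1 p.2 ≤ Cmax) →
        (∀ p ∈ E, 0 ≤ ecost p.1 p.2) →
        0 ≤ Vp →
      ∀ (a : ℕ → Vt → ℕ → ℝ) (ν : ℕ → Vt → Vt → ℕ → ℝ)
        (Ud : ℕ → ℝ) (Ui : ℕ → Vt → ℕ → ℝ),
        -- bounded nonnegative arrivals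
        (∀ t i, ∀ l ∈ Icc 1 L, a t i l ∈ Set.Icc 0 Amax) →
        -- flows are supported on links of E out of non-destination nodes,
        -- with lifetimes in {1,…,L}
        (∀ t i j l, ¬((i, j) ∈ E ∧ i ≠ d ∧ l ∈ Icc 1 L) → ν t i j l = 0) →
        (∀ t i j, (i, j) ∈ E → i ≠ d → ∀ l ∈ Icc 1 L, 0 ≤ ν t i j l) →
        -- capacity constraints
        (∀ t i j, (i, j) ∈ E → ∑ l ∈ Icc 1 L, ν t i j l ≤ C i j) →
        -- nonnegative initial virtual queues
        0 ≤ Ud 0 →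
        (∀ i, i ≠ d → ∀ l ∈ Icc 1 L, 0 ≤ Ui 0 i l) →
        -- virtual queue recursions
        (∀ t, Ud (t + 1) =
          max 0 (Ud t + γ * (∑ i, ∑ l ∈ Icc 1 L, a t i l)
            - ∑ l ∈ Icc 1 L, ∑ j ∈ univ.filter (fun j => (j, d) ∈ E), ν t j d l)) →
        (∀ t i, i ≠ d → ∀ l ∈ Icc 1 L, Ui (t + 1) i l =
          max 0 (Ui t i l
            + (∑ m ∈ Icc l L, ∑ j ∈ univ.filter (fun j => (i, j) ∈ E), ν t i j m)
            - (∑ m ∈ Icc (l + 1) L, ∑ j ∈ univ.filter (fun j => (j, i) ∈ E), ν t j i m)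
            - ∑ m ∈ Icc l L, a t i m)) →
        -- the drift-plus-penalty inequality
        ∀ t,
          ((Ud (t + 1) ^ 2 + ∑ i ∈ univ.filter (· ≠ d), ∑ l ∈ Icc 1 L, Ui (t + 1) i l ^ 2) / 2
            - (Ud t ^ 2 + ∑ i ∈ univ.filter (· ≠ d), ∑ l ∈ Icc 1 L, Ui t i l ^ 2) / 2)
            + Vp * (∑ p ∈ E, ecost p.1 p.2 * ∑ l ∈ Icc 1 L, ν t p.1 p.2 l)
          ≤ B + γ * (∑ i, ∑ l ∈ Icc 1 L, a t i l) * Ud t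
            - (∑ i ∈ univ.filter (· ≠ d), ∑ l ∈ Icc 1 L,
                Ui t i l * ∑ m ∈ Icc l L, a t i m)
            - ∑ p ∈ E.filter (fun p => p.1 ≠ d), ∑ l ∈ Icc 1 L,
                (-Vp * ecost p.1 p.2 - (∑ m ∈ Icc 1 l, Ui t p.1 m)
                  + (if p.2 = d then Ud t else ∑ m ∈ Icc 1 (l - 1), Ui t p.2 m))
                * ν t p.1 p.2 l := by
  classical
  set K : ℝ := (Fintype.card Vt : ℝ) * L * Amax + 2 * E.card * Cmax with hKdef
  have hcard : (1 : ℝ) ≤ (Fintype.card Vt : ℝ) := by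
    have : 0 < Fintype.card Vt := Fintype.card_pos_iff.mpr ⟨d⟩
    exact_mod_cast this
  have hLpos : (1 : ℝ) ≤ (L : ℝ) := by exact_mod_cast hL
  have hK : 0 ≤ K := by positivity
  refine ⟨((Fintype.card Vt : ℝ) * L + 1) * K ^ 2 / 2, by positivity, ?_⟩
  intro C ecost Vp hC hec hVp a ν Ud Ui ha hsupp hνnn' hcap _ _ hUdrec hUirec t
  -- global nonnegativity of flows
  have hνnn : ∀ i j l, 0 ≤ ν t i j l := by
    intro i j l
    by_cases h : (i, j) ∈ E ∧ i ≠ d ∧ l ∈ Icc 1 L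
    · exact hνnn' t i j h.1 h.2.1 l h.2.2
    · rw [hsupp t i j l h]
  -- the total flow
  set T : ℝ := ∑ p ∈ E, ∑ l ∈ Icc 1 L, ν t p.1 p.2 l with hTdef
  have hT0 : 0 ≤ T := Finset.sum_nonneg fun p _ => Finset.sum_nonneg fun l _ => hνnn _ _ _
  have hT : T ≤ (E.card : ℝ) * Cmax := by
    calc T ≤ ∑ _p ∈ E, Cmax := by
            refine Finset.sum_le_sum fun p hp => ?_
            exact le_trans (hcap t p.1 p.2 hp) (hC p hp).2
      _ = (E.card : ℝ) * Cmax := by rw [Finset.sum_const, nsmul_eq_mul]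
  -- outgoing partial sums are at most T
  have hPle : ∀ (i : Vt) (l : ℕ), 1 ≤ l →
      ∑ m ∈ Icc l L, ∑ j ∈ univ.filter (fun j => (i, j) ∈ E), ν t i j m ≤ T := by
    intro i l hl
    rw [Finset.sum_comm]
    have h1 : ∑ j ∈ univ.filter (fun j => (i, j) ∈ E), ∑ m ∈ Icc l L, ν t i j m
        ≤ ∑ j ∈ univ.filter (fun j => (i, j) ∈ E), ∑ m ∈ Icc 1 L, ν t i j m := by
      refine Finset.sum_le_sum fun j _ => ?_
      exact Finset.sum_le_sum_of_subset_of_nonneg (Finset.Icc_subset_Icc hl le_rfl)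
        (fun m _ _ => hνnn _ _ _)
    refine le_trans h1 ?_
    rw [hTdef, esum_out E (fun i j => ∑ m ∈ Icc 1 L, ν t i j m)]
    exact Finset.single_le_sum
      (f := fun i' => ∑ j ∈ univ.filter (fun j => (i', j) ∈ E), ∑ m ∈ Icc 1 L, ν t i' j m)
      (fun i' _ => Finset.sum_nonneg fun j _ => Finset.sum_nonneg fun m _ => hνnn _ _ _)
      (mem_univ i)
  -- incoming partial sums are at most T
  have hNle : ∀ (i : Vt) (l : ℕ),
      ∑ m ∈ Icc (l + 1) L, ∑ j ∈ univ.filter (fun j => (j, i) ∈ E), ν t j i m ≤ T := by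
    intro i l
    rw [Finset.sum_comm]
    have h1 : ∑ j ∈ univ.filter (fun j => (j, i) ∈ E), ∑ m ∈ Icc (l + 1) L, ν t j i m
        ≤ ∑ j ∈ univ.filter (fun j => (j, i) ∈ E), ∑ m ∈ Icc 1 L, ν t j i m := by
      refine Finset.sum_le_sum fun j _ => ?_
      exact Finset.sum_le_sum_of_subset_of_nonneg
        (Finset.Icc_subset_Icc (Nat.le_add_left 1 l) le_rfl) (fun m _ _ => hνnn _ _ _)
    refine le_trans h1 ?_
    rw [hTdef, esum_in E (fun j i' => ∑ m ∈ Icc 1 L, ν t j i' m)]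
    exact Finset.single_le_sum
      (f := fun i' => ∑ j ∈ univ.filter (fun j => (j, i') ∈ E), ∑ m ∈ Icc 1 L, ν t j i' m)
      (fun i' _ => Finset.sum_nonneg fun j _ => Finset.sum_nonneg fun m _ => hνnn _ _ _)
      (mem_univ i)
  have hNnn : ∀ (i : Vt) (l : ℕ),
      0 ≤ ∑ m ∈ Icc (l + 1) L, ∑ j ∈ univ.filter (fun j => (j, i) ∈ E), ν t j i m :=
    fun i l => Finset.sum_nonneg fun m _ => Finset.sum_nonneg fun j _ => hνnn _ _ _
  have hPnn : ∀ (i : Vt) (l : ℕ),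
      0 ≤ ∑ m ∈ Icc l L, ∑ j ∈ univ.filter (fun j => (i, j) ∈ E), ν t i j m :=
    fun i l => Finset.sum_nonneg fun m _ => Finset.sum_nonneg fun j _ => hνnn _ _ _
  -- the destination inflow
  set D : ℝ := ∑ l ∈ Icc 1 L, ∑ j ∈ univ.filter (fun j => (j, d) ∈ E), ν t j d l with hDdef
  have hD0 : 0 ≤ D := Finset.sum_nonneg fun l _ => Finset.sum_nonneg fun j _ => hνnn _ _ _
  have hDle : D ≤ T := by
    rw [hDdef, Finset.sum_comm, hTdef, esum_in E (fun j i' => ∑ l ∈ Icc 1 L, ν t j i' l)]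
    exact Finset.single_le_sum
      (f := fun i' => ∑ j ∈ univ.filter (fun j => (j, i') ∈ E), ∑ l ∈ Icc 1 L, ν t j i' l)
      (fun i' _ => Finset.sum_nonneg fun j _ => Finset.sum_nonneg fun l _ => hνnn _ _ _)
      (mem_univ d)
  -- arrival bounds
  set A : ℝ := ∑ i, ∑ l ∈ Icc 1 L, a t i l with hAdef
  have hAa : ∀ (i : Vt) (l : ℕ), 1 ≤ l →
      0 ≤ ∑ m ∈ Icc l L, a t i m ∧ ∑ m ∈ Icc l L, a t i m ≤ (L : ℝ) * Amax := by
    intro i l hl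
    have hmem : ∀ m ∈ Icc l L, a t i m ∈ Set.Icc (0 : ℝ) Amax := fun m hm => by
      refine ha t i m ?_
      simp only [mem_Icc] at hm ⊢; omega
    constructor
    · exact Finset.sum_nonneg fun m hm => (hmem m hm).1
    · calc ∑ m ∈ Icc l L, a t i m ≤ (Icc l L).card • Amax :=
            Finset.sum_le_card_nsmul _ _ _ fun m hm => (hmem m hm).2
        _ = ((Icc l L).card : ℝ) * Amax := by rw [nsmul_eq_mul]
        _ ≤ (L : ℝ) * Amax := by
            refine mul_le_mul_of_nonneg_right ?_ hAmax
            rw [Nat.card_Icc]; exact_mod_cast Nat.sub_le_of_le_add (by omega)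
  have hA0 : 0 ≤ A := Finset.sum_nonneg fun i _ => (hAa i 1 le_rfl).1
  have hAle : A ≤ (Fintype.card Vt : ℝ) * L * Amax := by
    calc A ≤ ∑ _i : Vt, (L : ℝ) * Amax :=
          Finset.sum_le_sum fun i _ => (hAa i 1 le_rfl).2
      _ = (Fintype.card Vt : ℝ) * ((L : ℝ) * Amax) := by
          rw [Finset.sum_const, nsmul_eq_mul, Finset.card_univ]
      _ = (Fintype.card Vt : ℝ) * L * Amax := by ring
  obtain ⟨hγ0, hγ1⟩ := hγ
  clear_value K T D A
  have hγA0 : 0 ≤ γ * A := mul_nonneg hγ0 hA0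
  have hγA : γ * A ≤ (Fintype.card Vt : ℝ) * L * Amax := by
    calc γ * A ≤ 1 * A := mul_le_mul_of_nonneg_right hγ1 hA0
      _ = A := one_mul A
      _ ≤ _ := hAle
  have hEC0 : (0:ℝ) ≤ (E.card : ℝ) * Cmax := mul_nonneg (Nat.cast_nonneg _) hCmax
  have hCLA0 : (0:ℝ) ≤ (Fintype.card Vt : ℝ) * L * Amax :=
    mul_nonneg (mul_nonneg (Nat.cast_nonneg _) (Nat.cast_nonneg _)) hAmax
  have hECK : (E.card : ℝ) * Cmax ≤ K := by rw [hKdef]; linarith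
  have hAK : (Fintype.card Vt : ℝ) * L * Amax ≤ K := by rw [hKdef]; linarith
  have hLAK : (L : ℝ) * Amax ≤ K := by
    refine le_trans ?_ hAK
    nlinarith [mul_nonneg (Nat.cast_nonneg L : (0:ℝ) ≤ (L:ℝ)) hAmax]
  have hLA : (L : ℝ) * Amax ≤ (Fintype.card Vt : ℝ) * L * Amax := by
    nlinarith [mul_nonneg (Nat.cast_nonneg L : (0:ℝ) ≤ (L:ℝ)) hAmax]
  -- drift bound for the destination queue
  have hUdb : Ud (t + 1) ^ 2 / 2 - Ud t ^ 2 / 2 ≤ Ud t * (γ * A - D) + K ^ 2 / 2 := by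
    rw [hUdrec t, ← hAdef, ← hDdef, show Ud t + γ * A - D = Ud t + (γ * A - D) from by ring]
    have h1 := sqmax (Ud t) (γ * A - D)
    have h2 : (γ * A - D) ^ 2 ≤ K ^ 2 := sq_le_sq' (by linarith) (by linarith)
    linarith
  -- drift bound for the other queues
  have hUib : ∀ i ∈ univ.filter (· ≠ d), ∀ l ∈ Icc 1 L,
      Ui (t + 1) i l ^ 2 / 2 - Ui t i l ^ 2 / 2 ≤ Ui t i l * ((∑ m ∈ Icc l L, ∑ j ∈ univ.filter (fun j => (i, j) ∈ E), ν t i j m) - (∑ m ∈ Icc (l + 1) L, ∑ j ∈ univ.filter (fun j => (j, i) ∈ E), ν t j i m) - (∑ m ∈ Icc l L, a t i m)) + K ^ 2 / 2 := by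
    intro i hi l hl
    rw [mem_filter] at hi
    have hl1 : 1 ≤ l := (mem_Icc.mp hl).1
    have hP := hPle i l hl1
    have hP0 := hPnn i l
    have hN := hNle i l
    have hN0 := hNnn i l
    obtain ⟨ha0, haU⟩ := hAa i l hl1
    rw [hUirec t i hi.2 l hl, show Ui t i l + (∑ m ∈ Icc l L, ∑ j ∈ univ.filter (fun j => (i, j) ∈ E), ν t i j m) - (∑ m ∈ Icc (l + 1) L, ∑ j ∈ univ.filter (fun j => (j, i) ∈ E), ν t j i m) - (∑ m ∈ Icc l L, a t i m) = Ui t i l + ((∑ m ∈ Icc l L, ∑ j ∈ univ.filter (fun j => (i, j) ∈ E), ν t i j m) - (∑ m ∈ Icc (l + 1) L, ∑ j ∈ univ.filter (fun j => (j, i) ∈ E), ν t j i m) - (∑ m ∈ Icc l L, a t i m)) from by ring]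
    have h1 := sqmax (Ui t i l) ((∑ m ∈ Icc l L, ∑ j ∈ univ.filter (fun j => (i, j) ∈ E), ν t i j m) - (∑ m ∈ Icc (l + 1) L, ∑ j ∈ univ.filter (fun j => (j, i) ∈ E), ν t j i m) - (∑ m ∈ Icc l L, a t i m))
    have h2 : ((∑ m ∈ Icc l L, ∑ j ∈ univ.filter (fun j => (i, j) ∈ E), ν t i j m) - (∑ m ∈ Icc (l + 1) L, ∑ j ∈ univ.filter (fun j => (j, i) ∈ E), ν t j i m) - (∑ m ∈ Icc l L, a t i m)) ^ 2 ≤ K ^ 2 := sq_le_sq' (by linarith) (by linarith)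
    linarith
  have hconst : ∑ i ∈ univ.filter (· ≠ d), ∑ l ∈ Icc 1 L, (K ^ 2 / 2)
      ≤ (Fintype.card Vt : ℝ) * L * (K ^ 2 / 2) := by
    have h1 : ∑ i ∈ univ.filter (· ≠ d), ∑ l ∈ Icc 1 L, (K ^ 2 / 2)
        = (((univ.filter (· ≠ d)).card : ℝ)) * ((L : ℝ) * (K ^ 2 / 2)) := by
      simp [Finset.sum_const, nsmul_eq_mul, Nat.card_Icc]
    have h2 : (((univ.filter (· ≠ d)).card : ℝ)) ≤ (Fintype.card Vt : ℝ) := by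
      exact_mod_cast le_trans (Finset.card_filter_le _ _) (le_of_eq Finset.card_univ)
    rw [h1]
    have h3 : (0:ℝ) ≤ (L : ℝ) * (K ^ 2 / 2) := by positivity
    nlinarith
  have hsum : ∑ i ∈ univ.filter (· ≠ d), ∑ l ∈ Icc 1 L, (Ui (t + 1) i l ^ 2 / 2 - Ui t i l ^ 2 / 2) ≤ (∑ i ∈ univ.filter (· ≠ d), ∑ l ∈ Icc 1 L, Ui t i l * ((∑ m ∈ Icc l L, ∑ j ∈ univ.filter (fun j => (i, j) ∈ E), ν t i j m) - (∑ m ∈ Icc (l + 1) L, ∑ j ∈ univ.filter (fun j => (j, i) ∈ E), ν t j i m) - (∑ m ∈ Icc l L, a t i m))) + (Fintype.card Vt : ℝ) * L * (K ^ 2 / 2) := by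
    calc ∑ i ∈ univ.filter (· ≠ d), ∑ l ∈ Icc 1 L, (Ui (t + 1) i l ^ 2 / 2 - Ui t i l ^ 2 / 2) ≤ ∑ i ∈ univ.filter (· ≠ d), ∑ l ∈ Icc 1 L, (Ui t i l * ((∑ m ∈ Icc l L, ∑ j ∈ univ.filter (fun j => (i, j) ∈ E), ν t i j m) - (∑ m ∈ Icc (l + 1) L, ∑ j ∈ univ.filter (fun j => (j, i) ∈ E), ν t j i m) - (∑ m ∈ Icc l L, a t i m)) + K ^ 2 / 2) :=
          Finset.sum_le_sum fun i hi => Finset.sum_le_sum fun l hl => hUib i hi l hl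
      _ = (∑ i ∈ univ.filter (· ≠ d), ∑ l ∈ Icc 1 L, Ui t i l * ((∑ m ∈ Icc l L, ∑ j ∈ univ.filter (fun j => (i, j) ∈ E), ν t i j m) - (∑ m ∈ Icc (l + 1) L, ∑ j ∈ univ.filter (fun j => (j, i) ∈ E), ν t j i m) - (∑ m ∈ Icc l L, a t i m))) + ∑ i ∈ univ.filter (· ≠ d), ∑ l ∈ Icc 1 L, (K ^ 2 / 2) := by
          simp only [Finset.sum_add_distrib]
      _ ≤ _ := by linarith
  have hSUx : ∑ i ∈ univ.filter (· ≠ d), ∑ l ∈ Icc 1 L, Ui t i l * ((∑ m ∈ Icc l L, ∑ j ∈ univ.filter (fun j => (i, j) ∈ E), ν t i j m) - (∑ m ∈ Icc (l + 1) L, ∑ j ∈ univ.filter (fun j => (j, i) ∈ E), ν t j i m) - (∑ m ∈ Icc l L, a t i m)) = (∑ i ∈ univ.filter (· ≠ d), ∑ l ∈ Icc 1 L, Ui t i l * (∑ m ∈ Icc l L, ∑ j ∈ univ.filter (fun j => (i, j) ∈ E), ν t i j m)) - (∑ i ∈ univ.filter (· ≠ d), ∑ l ∈ Icc 1 L, Ui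 t i l * (∑ m ∈ Icc (l + 1) L, ∑ j ∈ univ.filter (fun j => (j, i) ∈ E), ν t j i m)) - (∑ i ∈ univ.filter (· ≠ d), ∑ l ∈ Icc 1 L, Ui t i l * (∑ m ∈ Icc l L, a t i m)) := by
    simp only [mul_sub, Finset.sum_sub_distrib]
  have hsplit : (Ud (t + 1) ^ 2 + ∑ i ∈ univ.filter (· ≠ d), ∑ l ∈ Icc 1 L, Ui (t + 1) i l ^ 2) / 2
        - (Ud t ^ 2 + ∑ i ∈ univ.filter (· ≠ d), ∑ l ∈ Icc 1 L, Ui t i l ^ 2) / 2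
      = (Ud (t + 1) ^ 2 / 2 - Ud t ^ 2 / 2) + ∑ i ∈ univ.filter (· ≠ d), ∑ l ∈ Icc 1 L, (Ui (t + 1) i l ^ 2 / 2 - Ui t i l ^ 2 / 2) := by
    simp only [div_sub_div_same, ← Finset.sum_div, Finset.sum_sub_distrib]; ring
  -- identity part
  have I1 : ∑ p ∈ E.filter (fun p => p.1 ≠ d), ∑ l ∈ Icc 1 L, (Vp * ecost p.1 p.2) * ν t p.1 p.2 l = Vp * (∑ p ∈ E, ecost p.1 p.2 * ∑ l ∈ Icc 1 L, ν t p.1 p.2 l) := by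
    rw [Finset.sum_filter_of_ne (fun p hp h0 => ?_)]
    · rw [Finset.mul_sum]
      refine Finset.sum_congr rfl fun p hp => ?_
      simp [Finset.mul_sum, mul_assoc]
    · intro hd
      apply h0
      refine Finset.sum_eq_zero fun l _ => ?_
      rw [hsupp t p.1 p.2 l (fun h => h.2.1 hd)]; ring
  have I2 : ∑ p ∈ E.filter (fun p => p.1 ≠ d), ∑ l ∈ Icc 1 L, (∑ m ∈ Icc 1 l, Ui t p.1 m) * ν t p.1 p.2 l = ∑ i ∈ univ.filter (· ≠ d), ∑ l ∈ Icc 1 L, Ui t i l * (∑ m ∈ Icc l L, ∑ j ∈ univ.filter (fun j => (i, j) ∈ E), ν t i j m) := by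
    have hstep : ∀ i : Vt, ∑ j ∈ univ.filter (fun j => (i, j) ∈ E),
        ∑ l ∈ Icc 1 L, (∑ m ∈ Icc 1 l, Ui t i m) * ν t i j l
        = ∑ l ∈ Icc 1 L, Ui t i l * (∑ m ∈ Icc l L, ∑ j ∈ univ.filter (fun j => (i, j) ∈ E), ν t i j m) := by
      intro i
      rw [Finset.sum_comm,
        swap_sum L (Ui t i) (fun m => ∑ j ∈ univ.filter (fun j => (i, j) ∈ E), ν t i j m)]
      refine Finset.sum_congr rfl fun l _ => ?_
      rw [Finset.mul_sum]
    calc ∑ p ∈ E.filter (fun p => p.1 ≠ d), ∑ l ∈ Icc 1 L, (∑ m ∈ Icc 1 l, Ui t p.1 m) * ν t p.1 p.2 l = ∑ p ∈ E, ∑ l ∈ Icc 1 L, (∑ m ∈ Icc 1 l, Ui t p.1 m) * ν t p.1 p.2 l := by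
          refine Finset.sum_filter_of_ne fun p hp h0 => ?_
          intro hd
          apply h0
          refine Finset.sum_eq_zero fun l _ => ?_
          rw [hsupp t p.1 p.2 l (fun h => h.2.1 hd)]; ring
      _ = ∑ i : Vt, ∑ j ∈ univ.filter (fun j => (i, j) ∈ E),
            ∑ l ∈ Icc 1 L, (∑ m ∈ Icc 1 l, Ui t i m) * ν t i j l :=
          esum_out E (fun i j => ∑ l ∈ Icc 1 L, (∑ m ∈ Icc 1 l, Ui t i m) * ν t i j l)
      _ = ∑ i : Vt, ∑ l ∈ Icc 1 L, Ui t i l * (∑ m ∈ Icc l L, ∑ j ∈ univ.filter (fun j => (i, j) ∈ E), ν t i j m) :=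
          Finset.sum_congr rfl fun i _ => hstep i
      _ = ∑ i ∈ univ.filter (· ≠ d), ∑ l ∈ Icc 1 L, Ui t i l * (∑ m ∈ Icc l L, ∑ j ∈ univ.filter (fun j => (i, j) ∈ E), ν t i j m) := by
          refine (Finset.sum_filter_of_ne fun i _ h0 => ?_).symm
          intro hd
          apply h0
          refine Finset.sum_eq_zero fun l _ => ?_
          have : (∑ m ∈ Icc l L, ∑ j ∈ univ.filter (fun j => (i, j) ∈ E), ν t i j m) = 0 := by
            refine Finset.sum_eq_zero fun m _ => Finset.sum_eq_zero fun j _ => ?_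
            exact hsupp t i j m (fun h => h.2.1 hd)
          rw [this]; ring
  have I3a : ∑ p ∈ E.filter (fun p => p.1 ≠ d), ∑ l ∈ Icc 1 L, (if p.2 = d then Ud t * ν t p.1 p.2 l else 0) = Ud t * D := by
    calc ∑ p ∈ E.filter (fun p => p.1 ≠ d), ∑ l ∈ Icc 1 L, (if p.2 = d then Ud t * ν t p.1 p.2 l else 0) = ∑ p ∈ E, ∑ l ∈ Icc 1 L, (if p.2 = d then Ud t * ν t p.1 p.2 l else 0) := by
          refine Finset.sum_filter_of_ne fun p hp h0 => ?_
          intro hd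
          apply h0
          refine Finset.sum_eq_zero fun l _ => ?_
          rw [hsupp t p.1 p.2 l (fun h => h.2.1 hd)]
          simp
      _ = ∑ j : Vt, ∑ i ∈ univ.filter (fun i => (i, j) ∈ E),
            ∑ l ∈ Icc 1 L, (if j = d then Ud t * ν t i j l else 0) :=
          esum_in E (fun i j => ∑ l ∈ Icc 1 L, (if j = d then Ud t * ν t i j l else 0))
      _ = ∑ j : Vt, (if j = d then
            ∑ i ∈ univ.filter (fun i => (i, j) ∈ E), ∑ l ∈ Icc 1 L, Ud t * ν t i j l else 0) := by
          refine Finset.sum_congr rfl fun j _ => ?_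
          by_cases h : j = d <;> simp [h]
      _ = ∑ i ∈ univ.filter (fun i => (i, d) ∈ E), ∑ l ∈ Icc 1 L, Ud t * ν t i d l := by
          rw [Finset.sum_ite_eq' univ d
            (fun j => ∑ i ∈ univ.filter (fun i => (i, j) ∈ E), ∑ l ∈ Icc 1 L, Ud t * ν t i j l)]
          simp
      _ = Ud t * D := by
          rw [hDdef, Finset.sum_comm]
          simp_rw [← Finset.mul_sum]
  have I3b : ∑ p ∈ E.filter (fun p => p.1 ≠ d), ∑ l ∈ Icc 1 L, (if p.2 = d then 0 else (∑ m ∈ Icc 1 (l - 1), Ui t p.2 m) * ν t p.1 p.2 l) = ∑ i ∈ univ.filter (· ≠ d), ∑ l ∈ Icc 1 L, Ui t i l * (∑ m ∈ Icc (l + 1) L, ∑ j ∈ univ.filter (fun j => (j, i) ∈ E), ν t j i m) := by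
    have hstep : ∀ j : Vt, ∑ i ∈ univ.filter (fun i => (i, j) ∈ E),
        ∑ l ∈ Icc 1 L, (∑ m ∈ Icc 1 (l - 1), Ui t j m) * ν t i j l
        = ∑ l ∈ Icc 1 L, Ui t j l
            * ∑ m ∈ Icc (l + 1) L, ∑ i ∈ univ.filter (fun i => (i, j) ∈ E), ν t i j m := by
      intro j
      rw [Finset.sum_comm,
        swap_sum' L (Ui t j) (fun m => ∑ i ∈ univ.filter (fun i => (i, j) ∈ E), ν t i j m)]
      refine Finset.sum_congr rfl fun l _ => ?_
      rw [Finset.mul_sum]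
    calc ∑ p ∈ E.filter (fun p => p.1 ≠ d), ∑ l ∈ Icc 1 L, (if p.2 = d then 0 else (∑ m ∈ Icc 1 (l - 1), Ui t p.2 m) * ν t p.1 p.2 l) = ∑ p ∈ E, ∑ l ∈ Icc 1 L,
            (if p.2 = d then 0 else (∑ m ∈ Icc 1 (l - 1), Ui t p.2 m) * ν t p.1 p.2 l) := by
          refine Finset.sum_filter_of_ne fun p hp h0 => ?_
          intro hd
          apply h0
          refine Finset.sum_eq_zero fun l _ => ?_
          rw [hsupp t p.1 p.2 l (fun h => h.2.1 hd)]
          simp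
      _ = ∑ j : Vt, ∑ i ∈ univ.filter (fun i => (i, j) ∈ E), ∑ l ∈ Icc 1 L,
            (if j = d then 0 else (∑ m ∈ Icc 1 (l - 1), Ui t j m) * ν t i j l) :=
          esum_in E (fun i j => ∑ l ∈ Icc 1 L,
            (if j = d then 0 else (∑ m ∈ Icc 1 (l - 1), Ui t j m) * ν t i j l))
      _ = ∑ j : Vt, (if j = d then 0 else ∑ i ∈ univ.filter (fun i => (i, j) ∈ E),
            ∑ l ∈ Icc 1 L, (∑ m ∈ Icc 1 (l - 1), Ui t j m) * ν t i j l) := by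
          refine Finset.sum_congr rfl fun j _ => ?_
          by_cases h : j = d <;> simp [h]
      _ = ∑ j ∈ univ.filter (· ≠ d), ∑ i ∈ univ.filter (fun i => (i, j) ∈ E),
            ∑ l ∈ Icc 1 L, (∑ m ∈ Icc 1 (l - 1), Ui t j m) * ν t i j l := by
          rw [Finset.sum_filter]
          refine Finset.sum_congr rfl fun j _ => ?_
          by_cases h : j = d <;> simp [h]
      _ = ∑ i ∈ univ.filter (· ≠ d), ∑ l ∈ Icc 1 L, Ui t i l * (∑ m ∈ Icc (l + 1) L, ∑ j ∈ univ.filter (fun j => (j, i) ∈ E), ν t j i m) := Finset.sum_congr rfl fun j _ => hstep j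
  have hW : (∑ p ∈ E.filter (fun p => p.1 ≠ d), ∑ l ∈ Icc 1 L, (-Vp * ecost p.1 p.2 - (∑ m ∈ Icc 1 l, Ui t p.1 m) + (if p.2 = d then Ud t else ∑ m ∈ Icc 1 (l - 1), Ui t p.2 m)) * ν t p.1 p.2 l) + (∑ p ∈ E.filter (fun p => p.1 ≠ d), ∑ l ∈ Icc 1 L, (Vp * ecost p.1 p.2) * ν t p.1 p.2 l) + (∑ p ∈ E.filter (fun p => p.1 ≠ d), ∑ l ∈ Icc 1 L, (∑ m ∈ Icc 1 l, Ui t p.1 m) * ν t p.1 p.2 l) = ∑ p ∈ E.filter (fun p => p.1 ≠ d), ∑ l ∈ Icc 1 L, (if p.2 = d then Ud t else ∑ m ∈ Icc 1 (l - 1), Ui t p.2 m) * ν t p.1 p.2 l := by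
    rw [← Finset.sum_add_distrib, ← Finset.sum_add_distrib]
    refine Finset.sum_congr rfl fun p _ => ?_
    rw [← Finset.sum_add_distrib, ← Finset.sum_add_distrib]
    refine Finset.sum_congr rfl fun l _ => ?_
    ring
  have hIf : ∑ p ∈ E.filter (fun p => p.1 ≠ d), ∑ l ∈ Icc 1 L, (if p.2 = d then Ud t else ∑ m ∈ Icc 1 (l - 1), Ui t p.2 m) * ν t p.1 p.2 l = (∑ p ∈ E.filter (fun p => p.1 ≠ d), ∑ l ∈ Icc 1 L, (if p.2 = d then Ud t * ν t p.1 p.2 l else 0)) + (∑ p ∈ E.filter (fun p => p.1 ≠ d), ∑ l ∈ Icc 1 L, (if p.2 = d then 0 else (∑ m ∈ Icc 1 (l - 1), Ui t p.2 m) * ν t p.1 p.2 l)) := by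
    rw [← Finset.sum_add_distrib]
    refine Finset.sum_congr rfl fun p _ => ?_
    rw [← Finset.sum_add_distrib]
    refine Finset.sum_congr rfl fun l _ => ?_
    by_cases h : p.2 = d <;> simp [h]
  have hBeq : ((Fintype.card Vt : ℝ) * L + 1) * K ^ 2 / 2
      = (Fintype.card Vt : ℝ) * L * (K ^ 2 / 2) + K ^ 2 / 2 := by ring
  linarith [hsplit, hUdb, hsum, hSUx, I1, I2, I3a, I3b, hW, hIf, hBeq]
end

section
/- (Proposition 4, O(V) convergence-time part.) Consider the virtual-network setup with i.i.d. arrivals bounded by A_max and means λ_i^(l), suppose (λ, γ) lies in the interior of the capacity region with slack ε > 0, and run the proposed max-weight algorithm with control parameter V ≥ 1 starting from U(0) = 0. Then for every ε' > 0 there exists a constant c > 0, depending only on |V|, |E|, L, γ, A_max, max_{(i,j)} C_ij, max_{(i,j)} e_ij, ε, and ε' (and not on V), such that for every horizon T ≥ c·V: (1/T) ∑_{t=0}^{T−1} E[ν_{→d}(t)] ≥ γ ∑_{i∈V} ∑_{l=1}^{L} λ_i^(l) − ε'. In other words, the ε'-convergence time of the achieved reliability level is O(V). -/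
open Finset Filter Topology MeasureTheory ProbabilityTheory

private lemma lem_max_sq (r : ℝ) : (max 0 r)^2 ≤ r^2 := by
  rcases le_total r 0 with h|h
  · rw [max_eq_left h]; nlinarith
  · rw [max_eq_right h]

private lemma lem_abs_max_step (q δ : ℝ) (hq : 0 ≤ q) : |max 0 (q + δ) - q| ≤ |δ| := by
  rcases le_total (q + δ) 0 with h|h
  · rw [max_eq_left h]
    rw [abs_le]; constructor <;> cases abs_cases δ <;> linarith
  · rw [max_eq_right h]; simp
private lemma lem_abs_le_quad (r x : ℝ) (hr : 0 < r) : |x| ≤ (x^2/r + r)/2 := by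
  have h2 : 2*r*|x| ≤ x^2 + r^2 := by nlinarith [sq_abs x, sq_nonneg (|x| - r)]
  rw [div_add' _ _ _ hr.ne', le_div_iff₀ (by norm_num)]
  rw [le_div_iff₀ hr]
  linarith

private lemma lem_swap1 (L : ℕ) (g : ℕ → ℕ → ℝ) :
    ∑ l ∈ Icc 1 L, ∑ m ∈ Icc 1 l, g l m = ∑ m ∈ Icc 1 L, ∑ l ∈ Icc m L, g l m := by
  have h1 : ∀ l ∈ Icc 1 L, ∑ m ∈ Icc 1 l, g l m
      = ∑ m ∈ Icc 1 L, if m ≤ l then g l m else 0 := by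
    intro l hl
    rw [mem_Icc] at hl
    rw [← Finset.sum_filter]
    congr 1
    ext m; simp only [mem_filter, mem_Icc]; omega
  have h2 : ∀ m ∈ Icc 1 L, ∑ l ∈ Icc m L, g l m
      = ∑ l ∈ Icc 1 L, if m ≤ l then g l m else 0 := by
    intro m hm
    rw [mem_Icc] at hm
    rw [← Finset.sum_filter]
    congr 1
    ext l; simp only [mem_filter, mem_Icc]; omega
  rw [Finset.sum_congr rfl h1, Finset.sum_congr rfl h2, Finset.sum_comm]

private lemma lem_swap2 (L : ℕ) (g : ℕ → ℕ → ℝ) :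
    ∑ l ∈ Icc 1 L, ∑ m ∈ Icc 1 (l-1), g l m = ∑ m ∈ Icc 1 L, ∑ l ∈ Icc (m+1) L, g l m := by
  have h1 : ∀ l ∈ Icc 1 L, ∑ m ∈ Icc 1 (l-1), g l m
      = ∑ m ∈ Icc 1 L, if m + 1 ≤ l then g l m else 0 := by
    intro l hl
    rw [mem_Icc] at hl
    rw [← Finset.sum_filter]
    congr 1
    ext m; simp only [mem_filter, mem_Icc]; omega
  have h2 : ∀ m ∈ Icc 1 L, ∑ l ∈ Icc (m+1) L, g l m
      = ∑ l ∈ Icc 1 L, if m + 1 ≤ l then g l m else 0 := by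
    intro m hm
    rw [mem_Icc] at hm
    rw [← Finset.sum_filter]
    congr 1
    ext l; simp only [mem_filter, mem_Icc]; omega
  rw [Finset.sum_congr rfl h1, Finset.sum_congr rfl h2, Finset.sum_comm]

private lemma lem_integrable_of_bounded {Ω : Type} [MeasurableSpace Ω] (μ : Measure Ω)
    [IsFiniteMeasure μ] (f : Ω → ℝ) (b : ℝ) (hm : Measurable f) (hb : ∀ ω, |f ω| ≤ b) :
    Integrable f μ :=
  ⟨hm.aestronglyMeasurable, HasFiniteIntegral.of_bounded (C := b) (.of_forall hb)⟩
private lemma lem_flow_identity {Vt : Type*} [Fintype Vt] [DecidableEq Vt]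
    (d : Vt) (L : ℕ) (f : Vt → Vt → ℕ → ℝ) (U : Vt → ℕ → ℝ) (c : ℝ)
    (hfd : ∀ k, ∀ l ∈ Icc 1 L, f d k l = 0) :
    ∑ i, ∑ j, ∑ l ∈ Icc 1 L, f i j l *
        ((if j = d then c else ∑ m ∈ Icc 1 (l-1), U j m) - ∑ m ∈ Icc 1 l, U i m)
      = c * (∑ l ∈ Icc 1 L, ∑ j, f j d l)
        + ∑ i ∈ univ.erase d, ∑ m ∈ Icc 1 L, U i m *
            ((∑ m' ∈ Icc (m+1) L, ∑ j, f j i m') - (∑ m' ∈ Icc m L, ∑ j, f i j m')) := by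
  have expand : ∀ i j : Vt, ∑ l ∈ Icc 1 L, f i j l *
        ((if j = d then c else ∑ m ∈ Icc 1 (l-1), U j m) - ∑ m ∈ Icc 1 l, U i m)
      = (∑ l ∈ Icc 1 L, f i j l * (if j = d then c else ∑ m ∈ Icc 1 (l-1), U j m))
        - ∑ l ∈ Icc 1 L, f i j l * ∑ m ∈ Icc 1 l, U i m := by
    intro i j
    rw [← Finset.sum_sub_distrib]
    exact Finset.sum_congr rfl fun l _ => by ring
  simp only [expand, Finset.sum_sub_distrib]
  -- T_out computation
  have hout : ∀ i : Vt, ∑ j, ∑ l ∈ Icc 1 L, f i j l * ∑ m ∈ Icc 1 l, U i m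
      = ∑ m ∈ Icc 1 L, U i m * (∑ m' ∈ Icc m L, ∑ j, f i j m') := by
    intro i
    rw [Finset.sum_comm]
    have h1 : ∀ l ∈ Icc 1 L, ∑ j, f i j l * ∑ m ∈ Icc 1 l, U i m
        = ∑ m ∈ Icc 1 l, (∑ j, f i j l) * U i m := by
      intro l _
      rw [← Finset.sum_mul, Finset.mul_sum]
    rw [Finset.sum_congr rfl h1, lem_swap1 L (fun l m => (∑ j, f i j l) * U i m)]
    refine Finset.sum_congr rfl fun m _ => ?_
    rw [← Finset.sum_mul, mul_comm]
  -- T_in computation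
  have hin : ∑ i, ∑ j, ∑ l ∈ Icc 1 L, f i j l * (if j = d then c else ∑ m ∈ Icc 1 (l-1), U j m)
      = c * (∑ l ∈ Icc 1 L, ∑ j, f j d l)
        + ∑ j ∈ univ.erase d, ∑ m ∈ Icc 1 L, U j m * (∑ m' ∈ Icc (m+1) L, ∑ i, f i j m') := by
    rw [Finset.sum_comm]
    rw [← Finset.add_sum_erase (univ : Finset Vt)
      (fun j => ∑ i, ∑ l ∈ Icc 1 L, f i j l * (if j = d then c else ∑ m ∈ Icc 1 (l-1), U j m))
      (mem_univ d)]
    congr 1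
    · -- j = d term
      rw [Finset.sum_comm, Finset.mul_sum]
      refine Finset.sum_congr rfl fun l _ => ?_
      rw [Finset.mul_sum]
      refine Finset.sum_congr rfl fun i _ => ?_
      rw [if_pos rfl]; ring
    · -- j ≠ d terms
      refine Finset.sum_congr rfl fun j hj => ?_
      have hjd : j ≠ d := Finset.ne_of_mem_erase hj
      simp only [if_neg hjd]
      rw [Finset.sum_comm]
      have h1 : ∀ l ∈ Icc 1 L, ∑ i, f i j l * ∑ m ∈ Icc 1 (l-1), U j m
          = ∑ m ∈ Icc 1 (l-1), (∑ i, f i j l) * U j m := by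
        intro l _; rw [← Finset.sum_mul, Finset.mul_sum]
      rw [Finset.sum_congr rfl h1, lem_swap2 L (fun l m => (∑ i, f i j l) * U j m)]
      refine Finset.sum_congr rfl fun m _ => ?_
      rw [← Finset.sum_mul, mul_comm]
  rw [hin, Finset.sum_congr rfl (fun i (_ : i ∈ (univ : Finset Vt)) => hout i)]
  have houtd : ∑ m ∈ Icc 1 L, U d m * (∑ m' ∈ Icc m L, ∑ j, f d j m') = 0 := by
    refine Finset.sum_eq_zero fun m hm => ?_
    rw [mem_Icc] at hm
    have h0 : (∑ m' ∈ Icc m L, ∑ j, f d j m') = 0 := by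
      refine Finset.sum_eq_zero fun m' hm' => Finset.sum_eq_zero fun j _ => ?_
      rw [mem_Icc] at hm'
      exact hfd j m' (mem_Icc.mpr ⟨le_trans hm.1 hm'.1, hm'.2⟩)
    rw [h0, mul_zero]
  rw [← Finset.add_sum_erase (univ : Finset Vt)
    (fun i => ∑ m ∈ Icc 1 L, U i m * (∑ m' ∈ Icc m L, ∑ j, f i j m')) (mem_univ d)]
  rw [houtd, zero_add, add_sub_assoc, ← Finset.sum_sub_distrib]
  congr 1
  refine Finset.sum_congr rfl fun i _ => ?_
  rw [← Finset.sum_sub_distrib]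
  exact Finset.sum_congr rfl fun m _ => by ring
private lemma lem_cross {Ω : Type} [MeasurableSpace Ω] (μ : Measure Ω) [IsProbabilityMeasure μ]
    (Q ξ : ℕ → Ω → ℝ) (β : ℝ) (hβ : 0 ≤ β)
    (hQm : ∀ t, Measurable (Q t)) (hξm : ∀ t, Measurable (ξ t))
    (hQ0 : ∀ ω, Q 0 ω = 0)
    (hD : ∀ t ω, |Q (t+1) ω - Q t ω| ≤ β)
    (hξb : ∀ t ω, |ξ t ω| ≤ β)
    (horth : ∀ s t, s ≠ t → ∫ ω, ξ s ω * ξ t ω ∂μ = 0)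
    (T : ℕ) (hT : 1 ≤ T) :
    ∫ ω, (∑ t ∈ range T, Q t ω * ξ t ω) ∂μ ≤ (T : ℝ) * (β * (β + 1)) * Real.sqrt T := by
  classical
  set D : ℕ → Ω → ℝ := fun s ω => Q (s+1) ω - Q s ω with hDdef
  set S : ℕ → Ω → ℝ := fun s ω => ∑ t ∈ range T, if s < t then ξ t ω else 0 with hSdef
  -- pathwise rearrangement
  have hre : ∀ ω, ∑ t ∈ range T, Q t ω * ξ t ω = ∑ s ∈ range T, D s ω * S s ω := by
    intro ω
    have hQsum : ∀ t, Q t ω = ∑ s ∈ range t, D s ω := by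
      intro t
      rw [hDdef]
      rw [Finset.sum_range_sub (fun s => Q s ω)]
      rw [hQ0]; ring
    calc ∑ t ∈ range T, Q t ω * ξ t ω
        = ∑ t ∈ range T, ∑ s ∈ range T, (if s < t then D s ω * ξ t ω else 0) := by
          refine Finset.sum_congr rfl fun t ht => ?_
          rw [hQsum t, Finset.sum_mul, ← Finset.sum_filter]
          congr 1
          rw [mem_range] at ht
          ext s
          simp only [mem_filter, mem_range]
          omega
      _ = ∑ s ∈ range T, ∑ t ∈ range T, (if s < t then D s ω * ξ t ω else 0) :=
          Finset.sum_comm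
      _ = ∑ s ∈ range T, D s ω * S s ω := by
          refine Finset.sum_congr rfl fun s _ => ?_
          rw [hSdef]
          simp only []
          rw [Finset.mul_sum]
          refine Finset.sum_congr rfl fun t _ => ?_
          split_ifs <;> simp
  have hSm : ∀ s, Measurable (S s) := by
    intro s
    apply Finset.measurable_sum
    intro t _
    by_cases h : s < t
    · simpa [h] using hξm t
    · simpa [h] using measurable_const
  have hSb : ∀ s ω, |S s ω| ≤ T * β := by
    intro s ω
    calc |S s ω| ≤ ∑ t ∈ range T, |if s < t then ξ t ω else 0| :=
          Finset.abs_sum_le_sum_abs _ _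
      _ ≤ ∑ t ∈ range T, β := by
          refine Finset.sum_le_sum fun t _ => ?_
          split_ifs
          · exact hξb t ω
          · simpa using hβ
      _ = T * β := by rw [Finset.sum_const, card_range]; ring
  have hDb : ∀ s ω, |D s ω| ≤ β := fun s ω => hD s ω
  have hDSint : ∀ s, Integrable (fun ω => D s ω * S s ω) μ := by
    intro s
    refine lem_integrable_of_bounded μ _ (β * (T * β)) (((hQm (s+1)).sub (hQm s)).mul (hSm s)) ?_
    intro ω
    rw [abs_mul]
    exact mul_le_mul (hDb s ω) (hSb s ω) (abs_nonneg _) hβ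
  have key : ∫ ω, (∑ t ∈ range T, Q t ω * ξ t ω) ∂μ
      = ∑ s ∈ range T, ∫ ω, D s ω * S s ω ∂μ := by
    rw [show (fun ω => ∑ t ∈ range T, Q t ω * ξ t ω)
        = fun ω => ∑ s ∈ range T, D s ω * S s ω from funext hre]
    exact integral_finset_sum _ fun s _ => hDSint s
  -- variance bound
  have hS2 : ∀ s, ∫ ω, (S s ω)^2 ∂μ ≤ T * β^2 := by
    intro s
    have hexp : ∀ ω, (S s ω)^2 = ∑ t ∈ range T, ∑ t' ∈ range T,
        (if s < t then ξ t ω else 0) * (if s < t' then ξ t' ω else 0) := by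
      intro ω
      rw [hSdef]
      simp only []
      rw [sq, Finset.sum_mul_sum]
    have hint : ∀ t t' : ℕ, Integrable
        (fun ω => (if s < t then ξ t ω else 0) * (if s < t' then ξ t' ω else 0)) μ := by
      intro t t'
      refine lem_integrable_of_bounded μ _ (β * β) ?_ ?_
      · apply Measurable.mul <;>
        · split_ifs
          · apply hξm
          · exact measurable_const
      · intro ω
        rw [abs_mul]
        apply mul_le_mul _ _ (abs_nonneg _) hβ <;>
        · split_ifs
          · apply hξb
          · simpa using hβ
    calc ∫ ω, (S s ω)^2 ∂μ
        = ∑ t ∈ range T, ∑ t' ∈ range T, ∫ ω,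
            (if s < t then ξ t ω else 0) * (if s < t' then ξ t' ω else 0) ∂μ := by
          rw [show (fun ω => (S s ω)^2) = fun ω => ∑ t ∈ range T, ∑ t' ∈ range T,
            (if s < t then ξ t ω else 0) * (if s < t' then ξ t' ω else 0) from funext hexp]
          rw [integral_finset_sum _ fun t _ => integrable_finset_sum _ fun t' _ => hint t t']
          exact Finset.sum_congr rfl fun t _ => integral_finset_sum _ fun t' _ => hint t t'
      _ ≤ ∑ t ∈ range T, β^2 := by
          refine Finset.sum_le_sum fun t ht => ?_
          have hdiag : ∑ t' ∈ range T, ∫ ω,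
              (if s < t then ξ t ω else 0) * (if s < t' then ξ t' ω else 0) ∂μ
              = ∫ ω, (if s < t then ξ t ω else 0) * (if s < t then ξ t ω else 0) ∂μ := by
            refine Finset.sum_eq_single_of_mem t ht fun t' _ hne => ?_
            by_cases h1 : s < t <;> by_cases h2 : s < t' <;>
              simp [h1, h2, horth t t' (Ne.symm hne)]
          rw [hdiag]
          have hptw : ∀ ω, (if s < t then ξ t ω else 0) * (if s < t then ξ t ω else 0) ≤ β^2 := by
            intro ω
            split_ifs with h
            · rw [← sq]
              exact sq_le_sq' (by linarith [abs_le.mp (hξb t ω)])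
                (by linarith [abs_le.mp (hξb t ω)])
            · nlinarith [sq_nonneg β]
          calc ∫ ω, (if s < t then ξ t ω else 0) * (if s < t then ξ t ω else 0) ∂μ
              ≤ ∫ (_ : Ω), β^2 ∂μ := integral_mono (hint t t) (integrable_const _) hptw
            _ = β^2 := by simp
      _ = T * β^2 := by rw [Finset.sum_const, card_range]; ring
  -- per-s bound
  set r : ℝ := (β + 1) * Real.sqrt T with hrdef
  have hsqT : (0:ℝ) < Real.sqrt T := Real.sqrt_pos.mpr (by exact_mod_cast Nat.lt_of_lt_of_le Nat.zero_lt_one hT)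
  have hr : 0 < r := by positivity
  have hsq : Real.sqrt T * Real.sqrt T = (T:ℝ) := Real.mul_self_sqrt (by positivity)
  have hintS : ∀ s, Integrable (S s) μ := fun s => lem_integrable_of_bounded μ _ (T * β) (hSm s) (hSb s)
  have hintS2 : ∀ s, Integrable (fun ω => (S s ω)^2) μ := by
    intro s
    refine lem_integrable_of_bounded μ _ ((T*β)^2) ((hSm s).pow measurable_const) ?_
    intro ω
    rw [abs_pow]
    exact pow_le_pow_left₀ (abs_nonneg _) (hSb s ω) 2
  have hperS : ∀ s, ∫ ω, D s ω * S s ω ∂μ ≤ β * ((β + 1) * Real.sqrt T) := by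
    intro s
    have habsS : ∫ ω, |S s ω| ∂μ ≤ ((T * β^2)/r + r)/2 := by
      have h1 : ∫ ω, |S s ω| ∂μ ≤ ∫ ω, ((S s ω)^2/r + r)/2 ∂μ := by
        refine integral_mono ((hintS s).abs) ?_ (fun ω => lem_abs_le_quad r (S s ω) hr)
        refine Integrable.div_const ?_ 2
        exact ((hintS2 s).div_const r).add (integrable_const r)
      have h2 : ∫ ω, ((S s ω)^2/r + r)/2 ∂μ = ((∫ ω, (S s ω)^2 ∂μ)/r + r)/2 := by
        rw [integral_div, integral_add ((hintS2 s).div_const r) (integrable_const r),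
          integral_div, integral_const]
        simp
      rw [h2] at h1
      refine le_trans h1 ?_
      have := hS2 s
      gcongr
    calc ∫ ω, D s ω * S s ω ∂μ ≤ |∫ ω, D s ω * S s ω ∂μ| := le_abs_self _
      _ ≤ ∫ ω, |D s ω * S s ω| ∂μ := by
          have := norm_integral_le_integral_norm (μ := μ) (fun ω => D s ω * S s ω)
          simpa only [Real.norm_eq_abs] using this
      _ ≤ ∫ ω, β * |S s ω| ∂μ := by
          refine integral_mono (hDSint s).abs ((hintS s).abs.const_mul β) fun ω => ?_
          rw [abs_mul]
          exact mul_le_mul_of_nonneg_right (hDb s ω) (abs_nonneg _)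
      _ = β * ∫ ω, |S s ω| ∂μ := integral_const_mul β _
      _ ≤ β * (((T * β^2)/r + r)/2) := mul_le_mul_of_nonneg_left habsS hβ
      _ ≤ β * ((β + 1) * Real.sqrt T) := by
          refine mul_le_mul_of_nonneg_left ?_ hβ
          have hfrac : (T * β^2)/r ≤ (β + 1) * Real.sqrt T := by
            rw [div_le_iff₀ hr, hrdef]
            nlinarith [hsq, hsqT, sq_nonneg β]
          rw [← hrdef]
          linarith
  calc ∫ ω, (∑ t ∈ range T, Q t ω * ξ t ω) ∂μ
      = ∑ s ∈ range T, ∫ ω, D s ω * S s ω ∂μ := key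
    _ ≤ ∑ s ∈ range T, β * ((β + 1) * Real.sqrt T) := Finset.sum_le_sum fun s _ => hperS s
    _ = (T : ℝ) * (β * (β + 1)) * Real.sqrt T := by rw [Finset.sum_const, card_range]; push_cast; ring

private lemma lem_sum_le {α : Type*} (s : Finset α) (f : α → ℝ) (b : ℝ)
    (h : ∀ i ∈ s, f i ≤ b) : ∑ i ∈ s, f i ≤ s.card * b := by
  simpa [nsmul_eq_mul] using Finset.sum_le_card_nsmul s f b h

set_option maxHeartbeats 2000000 in
/-- Proposition 4, O(V) convergence-time part: in the
virtual-network setup with i.i.d. bounded arrivals whose mean rates `(λ, γ)`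
lie in the interior of the capacity region with slack `ε > 0`, for every
`ε' > 0` there is a constant `c > 0` — depending only on the node set, the link
set, `L`, `γ`, `A_max`, the capacity bound `C_max`, the cost bound `e_max`,
`ε` and `ε'`, and in particular not on the control parameter `V ≥ 1` — such
that, under the proposed max-weight algorithm started from `U(0) = 0`, for
every horizon `T ≥ c·V` the achieved reliability level satisfies
`(1/T) ∑_{t<T} E[ν_{→d}(t)] ≥ γ ∑_{i,l} λ_i^(l) − ε'`: the `ε'`-convergence
time is `O(V)`. -/
theorem stmt14 {Vt : Type*} [Fintype Vt] [DecidableEq Vt]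
    (d : Vt) (E : Finset (Vt × Vt)) (L : ℕ) (hL : 1 ≤ L)
    (γ Amax Cmax emax : ℝ) (hγ : γ ∈ Set.Icc (0 : ℝ) 1)
    (hAmax : 0 ≤ Amax) (hCmax : 0 ≤ Cmax) (hemax : 0 ≤ emax)
    (ε ε' : ℝ) (hε : 0 < ε) (hε' : 0 < ε') :
    ∃ c : ℝ, 0 < c ∧
      ∀ (Ω : Type) (_ : MeasurableSpace Ω) (μ : Measure Ω)
        (_ : IsProbabilityMeasure μ)
        (C ecost : Vt → Vt → ℝ) (Vp : ℝ),
        (∀ p ∈ E, 0 ≤ C p.1 p.2 ∧ C p.1 p.2 ≤ Cmax) →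
        (∀ p ∈ E, 0 ≤ ecost p.1 p.2 ∧ ecost p.1 p.2 ≤ emax) →
        1 ≤ Vp →
      ∀ (a : ℕ → Ω → Vt → ℕ → ℝ) (lam : Vt → ℕ → ℝ),
        (∀ t, Measurable (a t)) →
        (∀ t ω i, ∀ l ∈ Icc 1 L, a t ω i l ∈ Set.Icc 0 Amax) →
        iIndepFun a μ →
        (∀ t, IdentDistrib (a t) (a 0) μ μ) →
        (∀ t i, ∀ l ∈ Icc 1 L, (∫ ω, a t ω i l ∂μ) = lam i l) →
      -- (λ, γ) in the interior of the capacity region, with slack ε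
      ∀ (x : Vt → Vt → ℕ → ℝ),
        (∀ i j, (i, j) ∈ E → ∀ l ∈ Icc 1 L, 0 ≤ x i j l) →
        (∀ k, (d, k) ∈ E → ∀ l ∈ Icc 1 L, x d k l = 0) →
        (∀ p ∈ E, ∑ l ∈ Icc 1 L, x p.1 p.2 l ≤ C p.1 p.2) →
        (γ * (∑ i, ∑ l ∈ Icc 1 L, lam i l) + ε ≤
          ∑ l ∈ Icc 1 L, ∑ j ∈ univ.filter (fun j => (j, d) ∈ E), x j d l) →
        (∀ i, i ≠ d → ∀ l ∈ Icc 1 L,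
          (∑ m ∈ Icc l L, ∑ j ∈ univ.filter (fun j => (i, j) ∈ E), x i j m) + ε ≤
            (∑ m ∈ Icc (l + 1) L, ∑ j ∈ univ.filter (fun j => (j, i) ∈ E), x j i m)
              + ∑ m ∈ Icc l L, lam i m) →
      -- the algorithm: virtual queues, weights and max-weight flow decisions
      ∀ (ν : ℕ → Ω → Vt → Vt → ℕ → ℝ) (Ud : ℕ → Ω → ℝ) (Ui : ℕ → Ω → Vt → ℕ → ℝ)
        (w : ℕ → Ω → Vt → Vt → ℕ → ℝ) (lstar : ℕ → Ω → Vt → Vt → ℕ),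
        (∀ t, Measurable (ν t)) →
        (∀ t, Measurable (Ud t)) →
        (∀ t, Measurable (Ui t)) →
        (∀ ω, Ud 0 ω = 0 ∧ ∀ i l, Ui 0 ω i l = 0) →
        (∀ t ω i j l, ¬((i, j) ∈ E ∧ i ≠ d ∧ l ∈ Icc 1 L) → ν t ω i j l = 0) →
        (∀ t ω i j l, w t ω i j l =
          -Vp * ecost i j - (∑ m ∈ Icc 1 l, Ui t ω i m)
            + (if j = d then Ud t ω else ∑ m ∈ Icc 1 (l - 1), Ui t ω j m)) →
        (∀ t ω i j, lstar t ω i j ∈ Icc 1 L ∧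
          ∀ l ∈ Icc 1 L, w t ω i j l ≤ w t ω i j (lstar t ω i j)) →
        (∀ t ω i j, (i, j) ∈ E → i ≠ d → ∀ l ∈ Icc 1 L,
          ν t ω i j l =
            if l = lstar t ω i j ∧ 0 < w t ω i j (lstar t ω i j) then C i j else 0) →
        (∀ t ω, Ud (t + 1) ω =
          max 0 (Ud t ω + γ * (∑ i, ∑ l ∈ Icc 1 L, a t ω i l)
            - ∑ l ∈ Icc 1 L, ∑ j ∈ univ.filter (fun j => (j, d) ∈ E), ν t ω j d l)) →
        (∀ t ω i, i ≠ d → ∀ l ∈ Icc 1 L, Ui (t + 1) ω i l =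
          max 0 (Ui t ω i l
            + (∑ m ∈ Icc l L, ∑ j ∈ univ.filter (fun j => (i, j) ∈ E), ν t ω i j m)
            - (∑ m ∈ Icc (l + 1) L, ∑ j ∈ univ.filter (fun j => (j, i) ∈ E), ν t ω j i m)
            - ∑ m ∈ Icc l L, a t ω i m)) →
      -- O(V) convergence time of the achieved reliability level
      ∀ T : ℕ, c * Vp ≤ (T : ℝ) →
        γ * (∑ i, ∑ l ∈ Icc 1 L, lam i l) - ε' ≤
          (∑ t ∈ range T, ∫ ω,
            (∑ l ∈ Icc 1 L, ∑ j ∈ univ.filter (fun j => (j, d) ∈ E), ν t ω j d l) ∂μ)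
            / T := by
  classical
  obtain ⟨hγ0, hγ1⟩ := hγ
  have hn1 : 1 ≤ Fintype.card Vt := Fintype.card_pos_iff.mpr ⟨d⟩
  set n : ℕ := Fintype.card Vt with hn
  set β : ℝ := 2*(n:ℝ)*(L:ℝ)*(Amax + Cmax) with hβdef
  set B1 : ℝ := (E.card : ℝ) * (Cmax * emax) with hB1def
  set K : ℝ := (1 + (n:ℝ)*(L:ℝ)) * (β * (β+1)) with hKdef
  set B2 : ℝ := (1 + (n:ℝ)*(L:ℝ)) * β^2 + 2*B1 with hB2def
  have hβ0 : 0 ≤ β := by positivity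
  have hB10 : 0 ≤ B1 := by positivity
  have hK0 : 0 ≤ K := by positivity
  have hB20 : 0 ≤ B2 := by positivity
  refine ⟨2*B2/ε'^2 + (4*K/ε'^2 + 1)^2 + 1, by positivity, ?_⟩
  intro Ω mΩ μ hPμ C ecost Vp hC hecost hVp a lam hameas hab hiid hident hlam
    x hxnn hxd hxcap hxsd hxsi ν Ud Ui w lstar hνm hUdm hUim hU0 hν0 hw hlstar hνdef
    hUdrec hUirec T hTc
  -- abbreviations
  set A : ℕ → Ω → ℝ := fun t ω => ∑ i, ∑ l ∈ Icc 1 L, a t ω i l with hA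
  set Λ : ℝ := ∑ i, ∑ l ∈ Icc 1 L, lam i l with hΛ
  set νd : ℕ → Ω → ℝ :=
    fun t ω => ∑ l ∈ Icc 1 L, ∑ j ∈ univ.filter (fun j => (j, d) ∈ E), ν t ω j d l with hνdd
  set outν : ℕ → Ω → Vt → ℕ → ℝ :=
    fun t ω i l => ∑ m ∈ Icc l L, ∑ j ∈ univ.filter (fun j => (i, j) ∈ E), ν t ω i j m with houtν
  set innν : ℕ → Ω → Vt → ℕ → ℝ :=
    fun t ω i l => ∑ m ∈ Icc (l+1) L, ∑ j ∈ univ.filter (fun j => (j, i) ∈ E), ν t ω j i m with hinnν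
  set ag : ℕ → Ω → Vt → ℕ → ℝ := fun t ω i l => ∑ m ∈ Icc l L, a t ω i m with hag
  set lamg : Vt → ℕ → ℝ := fun i l => ∑ m ∈ Icc l L, lam i m with hlamgd
  set xd : ℝ := ∑ l ∈ Icc 1 L, ∑ j ∈ univ.filter (fun j => (j, d) ∈ E), x j d l with hxdv
  set outx : Vt → ℕ → ℝ :=
    fun i l => ∑ m ∈ Icc l L, ∑ j ∈ univ.filter (fun j => (i, j) ∈ E), x i j m with houtx
  set innx : Vt → ℕ → ℝ :=
    fun i l => ∑ m ∈ Icc (l+1) L, ∑ j ∈ univ.filter (fun j => (j, i) ∈ E), x j i m with hinnx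
  set SL : ℕ → Ω → ℝ :=
    fun t ω => (Ud t ω)^2 + ∑ i ∈ univ.erase d, ∑ l ∈ Icc 1 L, (Ui t ω i l)^2 with hSL
  set ξ0 : ℕ → Ω → ℝ := fun t ω => γ * (A t ω - Λ) with hξ0
  set ξn : Vt → ℕ → ℕ → Ω → ℝ := fun i l t ω => lamg i l - ag t ω i l with hξn
  set XX : ℕ → Ω → ℝ :=
    fun t ω => Ud t ω * ξ0 t ω
      + ∑ i ∈ univ.erase d, ∑ l ∈ Icc 1 L, Ui t ω i l * ξn i l t ω with hXX
  -- elementary facts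
  have hcard : ((Icc 1 L).card : ℝ) = (L : ℝ) := by rw [Nat.card_Icc]; push_cast; ring
  have hT1 : (1:ℝ) ≤ (T:ℝ) := by
    have h1 : (0:ℝ) ≤ 2*B2/ε'^2 := by positivity
    have h2 : (0:ℝ) ≤ (4*K/ε'^2+1)^2 := sq_nonneg _
    have hc1 : (1:ℝ) ≤ 2*B2/ε'^2 + (4*K/ε'^2+1)^2 + 1 := by linarith
    have hmul : (1:ℝ)*1 ≤ (2*B2/ε'^2 + (4*K/ε'^2+1)^2 + 1) * Vp :=
      mul_le_mul hc1 hVp (by norm_num) (by linarith)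
    calc (1:ℝ) = 1*1 := by norm_num
      _ ≤ (2*B2/ε'^2 + (4*K/ε'^2+1)^2 + 1) * Vp := hmul
      _ ≤ (T:ℝ) := hTc
  have hTpos : (0:ℝ) < T := lt_of_lt_of_le one_pos hT1
  have hTnat1 : 1 ≤ T := by exact_mod_cast hT1
  have hnn1 : (1:ℝ) ≤ (n:ℝ) := by exact_mod_cast hn1
  have hLL1 : (1:ℝ) ≤ (L:ℝ) := by exact_mod_cast hL
  have hnL1 : (1:ℝ) ≤ (n:ℝ) * (L:ℝ) := by
    calc (1:ℝ) = 1*1 := by norm_num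
      _ ≤ (n:ℝ) * (L:ℝ) := mul_le_mul hnn1 hLL1 (by norm_num) (by linarith)
  -- measurability of evaluations
  have hma : ∀ t i l, Measurable (fun ω => a t ω i l) := fun t i l =>
    (measurable_pi_apply l).comp ((measurable_pi_apply i).comp (hameas t))
  have hmν : ∀ t i j l, Measurable (fun ω => ν t ω i j l) := fun t i j l =>
    (measurable_pi_apply l).comp ((measurable_pi_apply j).comp
      ((measurable_pi_apply i).comp (hνm t)))
  have hmUi : ∀ t i l, Measurable (fun ω => Ui t ω i l) := fun t i l =>
    (measurable_pi_apply l).comp ((measurable_pi_apply i).comp (hUim t))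
  -- pointwise bounds
  have hν0' : ∀ t ω i j l, 0 ≤ ν t ω i j l := by
    intro t ω i j l
    by_cases h : (i, j) ∈ E ∧ i ≠ d ∧ l ∈ Icc 1 L
    · rw [hνdef t ω i j h.1 h.2.1 l h.2.2]
      split_ifs
      · exact (hC _ h.1).1
      · exact le_refl 0
    · rw [hν0 t ω i j l h]
  have hνC : ∀ t ω i j l, ν t ω i j l ≤ Cmax := by
    intro t ω i j l
    by_cases h : (i, j) ∈ E ∧ i ≠ d ∧ l ∈ Icc 1 L
    · rw [hνdef t ω i j h.1 h.2.1 l h.2.2]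
      split_ifs
      · exact (hC _ h.1).2
      · exact hCmax
    · rw [hν0 t ω i j l h]; exact hCmax
  have hAb : ∀ t ω, 0 ≤ A t ω ∧ A t ω ≤ (n:ℝ)*(L:ℝ)*Amax := by
    intro t ω
    constructor
    · exact Finset.sum_nonneg fun i _ => Finset.sum_nonneg fun l hl => (hab t ω i l hl).1
    · calc A t ω ≤ (univ : Finset Vt).card * ((L:ℝ)*Amax) := by
            refine lem_sum_le _ _ _ fun i _ => ?_
            calc ∑ l ∈ Icc 1 L, a t ω i l ≤ (Icc 1 L).card * Amax :=
                  lem_sum_le _ _ _ fun l hl => (hab t ω i l hl).2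
              _ = (L:ℝ)*Amax := by rw [hcard]
        _ = (n:ℝ)*(L:ℝ)*Amax := by rw [Finset.card_univ, ← hn]; ring
  have hνdb : ∀ t ω, 0 ≤ νd t ω ∧ νd t ω ≤ (n:ℝ)*(L:ℝ)*Cmax := by
    intro t ω
    constructor
    · exact Finset.sum_nonneg fun l _ => Finset.sum_nonneg fun j _ => hν0' t ω j d l
    · calc νd t ω ≤ (Icc 1 L).card * ((n:ℝ)*Cmax) := by
            refine lem_sum_le _ _ _ fun l _ => ?_
            calc ∑ j ∈ univ.filter (fun j => (j, d) ∈ E), ν t ω j d l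
                ≤ ((univ.filter (fun j => (j, d) ∈ E)).card : ℝ) * Cmax :=
                  lem_sum_le _ _ _ fun j _ => hνC t ω j d l
              _ ≤ (n:ℝ)*Cmax := by
                  refine mul_le_mul_of_nonneg_right ?_ hCmax
                  have := Finset.card_filter_le (univ : Finset Vt) (fun j => (j, d) ∈ E)
                  calc ((univ.filter (fun j => (j, d) ∈ E)).card : ℝ)
                      ≤ (univ : Finset Vt).card := by exact_mod_cast this
                    _ = (n:ℝ) := by rw [Finset.card_univ, hn]
        _ = (n:ℝ)*(L:ℝ)*Cmax := by rw [hcard]; ring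
  -- lam bounds
  have hlamb : ∀ i, ∀ l ∈ Icc 1 L, 0 ≤ lam i l ∧ lam i l ≤ Amax := by
    intro i l hl
    have hint : Integrable (fun ω => a 0 ω i l) μ :=
      lem_integrable_of_bounded μ _ Amax (hma 0 i l) (fun ω => by
        rw [abs_le]
        refine ⟨by linarith [(hab 0 ω i l hl).1, (hab 0 ω i l hl).2], (hab 0 ω i l hl).2⟩)
    constructor
    · rw [← hlam 0 i l hl]
      exact integral_nonneg fun ω => (hab 0 ω i l hl).1
    · rw [← hlam 0 i l hl]
      calc ∫ ω, a 0 ω i l ∂μ ≤ ∫ (_ : Ω), Amax ∂μ :=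
            integral_mono hint (integrable_const _) fun ω => (hab 0 ω i l hl).2
        _ = Amax := by simp
  have hΛb : 0 ≤ Λ ∧ Λ ≤ (n:ℝ)*(L:ℝ)*Amax := by
    constructor
    · exact Finset.sum_nonneg fun i _ => Finset.sum_nonneg fun l hl => (hlamb i l hl).1
    · calc Λ ≤ (univ : Finset Vt).card * ((L:ℝ)*Amax) := by
            refine lem_sum_le _ _ _ fun i _ => ?_
            calc ∑ l ∈ Icc 1 L, lam i l ≤ (Icc 1 L).card * Amax :=
                  lem_sum_le _ _ _ fun l hl => (hlamb i l hl).2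
              _ = (L:ℝ)*Amax := by rw [hcard]
        _ = (n:ℝ)*(L:ℝ)*Amax := by rw [Finset.card_univ, ← hn]; ring
  have hIccsub : ∀ l, l ∈ Icc 1 L → ∀ m, m ∈ Icc l L → m ∈ Icc 1 L := by
    intro l hl m hm
    rw [mem_Icc] at *
    omega
  have hagb : ∀ t ω i, ∀ l ∈ Icc 1 L, 0 ≤ ag t ω i l ∧ ag t ω i l ≤ (L:ℝ)*Amax := by
    intro t ω i l hl
    constructor
    · exact Finset.sum_nonneg fun m hm => (hab t ω i m (hIccsub l hl m hm)).1
    · calc ag t ω i l ≤ (Icc l L).card * Amax :=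
            lem_sum_le _ _ _ fun m hm => (hab t ω i m (hIccsub l hl m hm)).2
        _ ≤ (L:ℝ)*Amax := by
            refine mul_le_mul_of_nonneg_right ?_ hAmax
            have h1 : (Icc l L).card ≤ L := by
              rw [Nat.card_Icc]; rw [mem_Icc] at hl; omega
            exact_mod_cast h1
  have hlamgb : ∀ i, ∀ l ∈ Icc 1 L, 0 ≤ lamg i l ∧ lamg i l ≤ (L:ℝ)*Amax := by
    intro i l hl
    constructor
    · exact Finset.sum_nonneg fun m hm => (hlamb i m (hIccsub l hl m hm)).1
    · calc lamg i l ≤ (Icc l L).card * Amax :=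
            lem_sum_le _ _ _ fun m hm => (hlamb i m (hIccsub l hl m hm)).2
        _ ≤ (L:ℝ)*Amax := by
            refine mul_le_mul_of_nonneg_right ?_ hAmax
            have h1 : (Icc l L).card ≤ L := by
              rw [Nat.card_Icc]; rw [mem_Icc] at hl; omega
            exact_mod_cast h1
  have houtb : ∀ t ω i, ∀ l ∈ Icc 1 L, 0 ≤ outν t ω i l ∧ outν t ω i l ≤ (n:ℝ)*(L:ℝ)*Cmax := by
    intro t ω i l hl
    constructor
    · exact Finset.sum_nonneg fun m _ => Finset.sum_nonneg fun j _ => hν0' t ω i j m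
    · calc outν t ω i l ≤ (Icc l L).card * ((n:ℝ)*Cmax) := by
            refine lem_sum_le _ _ _ fun m _ => ?_
            calc ∑ j ∈ univ.filter (fun j => (i, j) ∈ E), ν t ω i j m
                ≤ ((univ.filter (fun j => (i, j) ∈ E)).card : ℝ) * Cmax :=
                  lem_sum_le _ _ _ fun j _ => hνC t ω i j m
              _ ≤ (n:ℝ)*Cmax := by
                  refine mul_le_mul_of_nonneg_right ?_ hCmax
                  have := Finset.card_filter_le (univ : Finset Vt) (fun j => (i, j) ∈ E)
                  calc ((univ.filter (fun j => (i, j) ∈ E)).card : ℝ)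
                      ≤ (univ : Finset Vt).card := by exact_mod_cast this
                    _ = (n:ℝ) := by rw [Finset.card_univ, hn]
        _ ≤ (n:ℝ)*(L:ℝ)*Cmax := by
            have h1 : (Icc l L).card ≤ L := by
              rw [Nat.card_Icc]; rw [mem_Icc] at hl; omega
            have h2 : ((Icc l L).card : ℝ) ≤ (L:ℝ) := by exact_mod_cast h1
            have h3 : (0:ℝ) ≤ (n:ℝ)*Cmax := by positivity
            calc ((Icc l L).card : ℝ) * ((n:ℝ)*Cmax) ≤ (L:ℝ) * ((n:ℝ)*Cmax) :=
                  mul_le_mul_of_nonneg_right h2 h3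
              _ = (n:ℝ)*(L:ℝ)*Cmax := by ring
  have hinnb : ∀ t ω i l, 0 ≤ innν t ω i l ∧ innν t ω i l ≤ (n:ℝ)*(L:ℝ)*Cmax := by
    intro t ω i l
    constructor
    · exact Finset.sum_nonneg fun m _ => Finset.sum_nonneg fun j _ => hν0' t ω j i m
    · calc innν t ω i l ≤ (Icc (l+1) L).card * ((n:ℝ)*Cmax) := by
            refine lem_sum_le _ _ _ fun m _ => ?_
            calc ∑ j ∈ univ.filter (fun j => (j, i) ∈ E), ν t ω j i m
                ≤ ((univ.filter (fun j => (j, i) ∈ E)).card : ℝ) * Cmax :=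
                  lem_sum_le _ _ _ fun j _ => hνC t ω j i m
              _ ≤ (n:ℝ)*Cmax := by
                  refine mul_le_mul_of_nonneg_right ?_ hCmax
                  have := Finset.card_filter_le (univ : Finset Vt) (fun j => (j, i) ∈ E)
                  calc ((univ.filter (fun j => (j, i) ∈ E)).card : ℝ)
                      ≤ (univ : Finset Vt).card := by exact_mod_cast this
                    _ = (n:ℝ) := by rw [Finset.card_univ, hn]
        _ ≤ (n:ℝ)*(L:ℝ)*Cmax := by
            have h1 : (Icc (l+1) L).card ≤ L := by rw [Nat.card_Icc]; omega
            have h2 : ((Icc (l+1) L).card : ℝ) ≤ (L:ℝ) := by exact_mod_cast h1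
            have h3 : (0:ℝ) ≤ (n:ℝ)*Cmax := by positivity
            calc ((Icc (l+1) L).card : ℝ) * ((n:ℝ)*Cmax) ≤ (L:ℝ) * ((n:ℝ)*Cmax) :=
                  mul_le_mul_of_nonneg_right h2 h3
              _ = (n:ℝ)*(L:ℝ)*Cmax := by ring
  -- queue nonnegativity
  have hUdnn : ∀ t ω, 0 ≤ Ud t ω := by
    intro t
    induction t with
    | zero => intro ω; rw [(hU0 ω).1]
    | succ t _ => intro ω; rw [hUdrec t ω]; exact le_max_left _ _
  have hUinn : ∀ t ω i, i ≠ d → ∀ l ∈ Icc 1 L, 0 ≤ Ui t ω i l := by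
    intro t
    induction t with
    | zero => intro ω i _ l _; rw [(hU0 ω).2 i l]
    | succ t _ => intro ω i hi l hl; rw [hUirec t ω i hi l hl]; exact le_max_left _ _
  -- recursions in increment form
  have hUdrec' : ∀ t ω, Ud (t+1) ω = max 0 (Ud t ω + (γ * A t ω - νd t ω)) := by
    intro t ω
    rw [hUdrec t ω]
    congr 1
    rw [hA, hνdd]
    ring
  have hUirec' : ∀ t ω i, i ≠ d → ∀ l ∈ Icc 1 L, Ui (t+1) ω i l
      = max 0 (Ui t ω i l + (outν t ω i l - innν t ω i l - ag t ω i l)) := by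
    intro t ω i hi l hl
    rw [hUirec t ω i hi l hl]
    congr 1
    rw [houtν, hinnν, hag]
    ring
  -- per-step increment bounds
  have hβeq : β = 2*((n:ℝ)*(L:ℝ)*Amax) + 2*((n:ℝ)*(L:ℝ)*Cmax) := by rw [hβdef]; ring
  have hnLA0 : (0:ℝ) ≤ (n:ℝ)*(L:ℝ)*Amax := by positivity
  have hnLC0 : (0:ℝ) ≤ (n:ℝ)*(L:ℝ)*Cmax := by positivity
  have hLA_nLA : (L:ℝ)*Amax ≤ (n:ℝ)*(L:ℝ)*Amax := by
    have h := le_mul_of_one_le_left (by positivity : (0:ℝ) ≤ (L:ℝ)*Amax) hnn1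
    linarith only [h]
  have hδ0b : ∀ t ω, |γ * A t ω - νd t ω| ≤ β := by
    intro t ω
    have h1 := hAb t ω
    have h2 := hνdb t ω
    have h3 : γ * A t ω ≤ A t ω := mul_le_of_le_one_left h1.1 hγ1
    have h4 : 0 ≤ γ * A t ω := mul_nonneg hγ0 h1.1
    rw [abs_le]
    constructor
    · linarith only [h4, h2.2, hβeq, hnLA0, hnLC0]
    · linarith only [h3, h1.2, h2.1, hβeq, hnLA0, hnLC0]
  have hδnb : ∀ t ω i, i ≠ d → ∀ l ∈ Icc 1 L,
      |outν t ω i l - innν t ω i l - ag t ω i l| ≤ β := by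
    intro t ω i hi l hl
    have h1 := houtb t ω i l hl
    have h2 := hinnb t ω i l
    have h3 := hagb t ω i l hl
    rw [abs_le]
    constructor
    · linarith only [h1.1, h2.2, h3.2, hLA_nLA, hβeq, hnLA0, hnLC0]
    · linarith only [h1.2, h2.1, h3.1, hβeq, hnLA0, hnLC0]
  have hstepUd : ∀ t ω, |Ud (t+1) ω - Ud t ω| ≤ β := by
    intro t ω
    rw [hUdrec' t ω]
    exact le_trans (lem_abs_max_step _ _ (hUdnn t ω)) (hδ0b t ω)
  have hstepUi : ∀ t ω i, i ≠ d → ∀ l ∈ Icc 1 L, |Ui (t+1) ω i l - Ui t ω i l| ≤ β := by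
    intro t ω i hi l hl
    rw [hUirec' t ω i hi l hl]
    exact le_trans (lem_abs_max_step _ _ (hUinn t ω i hi l hl)) (hδnb t ω i hi l hl)
  -- centered-arrival bounds
  have hβA : (n:ℝ)*(L:ℝ)*Amax ≤ β := by
    linarith only [hβeq, hnLA0, hnLC0]
  have hξ0b : ∀ t ω, |ξ0 t ω| ≤ β := by
    intro t ω
    rw [hξ0]
    have h1 := hAb t ω
    have h2 := hΛb
    rw [abs_mul, abs_of_nonneg hγ0]
    calc γ * |A t ω - Λ| ≤ 1 * |A t ω - Λ| :=
          mul_le_mul_of_nonneg_right hγ1 (abs_nonneg _)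
      _ = |A t ω - Λ| := by ring
      _ ≤ β := by
          rw [abs_le]
          constructor <;> [linarith only [h1.1, h2.2, hβA]; linarith only [h1.2, h2.1, hβA]]
  have hξnb : ∀ i, ∀ l ∈ Icc 1 L, ∀ t ω, |ξn i l t ω| ≤ β := by
    intro i l hl t ω
    have heq : ξn i l t ω = lamg i l - ag t ω i l := rfl
    rw [heq]
    have h1 := hagb t ω i l hl
    have h2 := hlamgb i l hl
    have h3 : (L:ℝ)*Amax ≤ β := by linarith only [hLA_nLA, hβeq, hnLA0, hnLC0]
    rw [abs_le]
    constructor <;> [linarith only [h1.2, h2.1, h3]; linarith only [h1.1, h2.2, h3]]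
  -- integrability of arrivals and means
  have hint_a : ∀ t i, ∀ l ∈ Icc 1 L, Integrable (fun ω => a t ω i l) μ := by
    intro t i l hl
    refine lem_integrable_of_bounded μ _ Amax (hma t i l) fun ω => ?_
    rw [abs_le]
    exact ⟨by linarith [(hab t ω i l hl).1, (hab t ω i l hl).2], (hab t ω i l hl).2⟩
  have hint_A : ∀ t, Integrable (A t) μ := by
    intro t
    refine lem_integrable_of_bounded μ _ ((n:ℝ)*(L:ℝ)*Amax) ?_ fun ω => ?_
    · exact Finset.measurable_sum _ fun i _ => Finset.measurable_sum _ fun l _ => hma t i l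
    · rw [abs_le]
      exact ⟨by linarith [(hAb t ω).1, (hAb t ω).2], (hAb t ω).2⟩
  have hAint : ∀ t, ∫ ω, A t ω ∂μ = Λ := by
    intro t
    rw [hA, hΛ]
    rw [integral_finset_sum _ fun i _ =>
      (integrable_finset_sum (Icc 1 L) fun l hl => hint_a t i l hl)]
    refine Finset.sum_congr rfl fun i _ => ?_
    rw [integral_finset_sum _ fun l hl => hint_a t i l hl]
    exact Finset.sum_congr rfl fun l hl => hlam t i l hl
  have hmean0 : ∀ t, ∫ ω, ξ0 t ω ∂μ = 0 := by
    intro t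
    rw [hξ0]
    rw [integral_const_mul]
    rw [integral_sub (hint_A t) (integrable_const Λ), hAint t, integral_const]
    simp
  have hint_ag : ∀ t i, ∀ l ∈ Icc 1 L, Integrable (fun ω => ag t ω i l) μ := by
    intro t i l hl
    refine lem_integrable_of_bounded μ _ ((L:ℝ)*Amax) ?_ fun ω => ?_
    · exact Finset.measurable_sum _ fun m _ => hma t i m
    · rw [abs_le]
      exact ⟨by linarith [(hagb t ω i l hl).1, (hagb t ω i l hl).2], (hagb t ω i l hl).2⟩
  have hmeann : ∀ i, ∀ l ∈ Icc 1 L, ∀ t, ∫ ω, ξn i l t ω ∂μ = 0 := by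
    intro i l hl t
    rw [hξn]
    simp only []
    rw [integral_sub (integrable_const _) (hint_ag t i l hl), integral_const]
    have : ∫ ω, ag t ω i l ∂μ = lamg i l := by
      rw [hag, hlamgd]
      rw [integral_finset_sum _ fun m hm => hint_a t i m (hIccsub l hl m hm)]
      exact Finset.sum_congr rfl fun m hm => hlam t i m (hIccsub l hl m hm)
    rw [this]
    simp
  -- orthogonality via independence
  have hξ0meas : ∀ t, Measurable (ξ0 t) := by
    intro t
    rw [hξ0]
    exact ((Finset.measurable_sum _ fun i _ => Finset.measurable_sum _ fun l _ =>
      hma t i l).sub measurable_const).const_mul γ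
  have hξnmeas : ∀ i l t, Measurable (ξn i l t) := by
    intro i l t
    rw [hξn]
    exact (measurable_const.sub (Finset.measurable_sum _ fun m _ => hma t i m))
  have hint_ξ0 : ∀ t, Integrable (ξ0 t) μ := fun t =>
    lem_integrable_of_bounded μ _ β (hξ0meas t) (hξ0b t)
  have hint_ξn : ∀ i, ∀ l ∈ Icc 1 L, ∀ t, Integrable (ξn i l t) μ := fun i l hl t =>
    lem_integrable_of_bounded μ _ β (hξnmeas i l t) (hξnb i l hl t)
  have horth0 : ∀ s t, s ≠ t → ∫ ω, ξ0 s ω * ξ0 t ω ∂μ = 0 := by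
    intro s t hst
    have hg : Measurable (fun v : Vt → ℕ → ℝ => γ * ((∑ i, ∑ l ∈ Icc 1 L, v i l) - Λ)) :=
      ((Finset.measurable_sum _ fun i _ => Finset.measurable_sum _ fun l _ =>
        (measurable_pi_apply l).comp (measurable_pi_apply i)).sub
          measurable_const).const_mul γ
    have hcs : ξ0 s = (fun v : Vt → ℕ → ℝ => γ * ((∑ i, ∑ l ∈ Icc 1 L, v i l) - Λ)) ∘ (a s) := rfl
    have hct : ξ0 t = (fun v : Vt → ℕ → ℝ => γ * ((∑ i, ∑ l ∈ Icc 1 L, v i l) - Λ)) ∘ (a t) := rfl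
    have hind : IndepFun (ξ0 s) (ξ0 t) μ := by
      rw [hcs, hct]
      exact (hiid.indepFun hst).comp hg hg
    have := IndepFun.integral_mul_eq_mul_integral hind (hint_ξ0 s).aestronglyMeasurable (hint_ξ0 t).aestronglyMeasurable
    calc ∫ ω, ξ0 s ω * ξ0 t ω ∂μ = ∫ ω, (ξ0 s * ξ0 t) ω ∂μ := rfl
      _ = (∫ ω, ξ0 s ω ∂μ) * ∫ ω, ξ0 t ω ∂μ := this
      _ = 0 := by rw [hmean0 s, hmean0 t]; ring
  have horthn : ∀ i, ∀ l ∈ Icc 1 L, ∀ s t, s ≠ t → ∫ ω, ξn i l s ω * ξn i l t ω ∂μ = 0 := by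
    intro i l hl s t hst
    have hg : Measurable (fun v : Vt → ℕ → ℝ => lamg i l - ∑ m ∈ Icc l L, v i m) :=
      measurable_const.sub (Finset.measurable_sum _ fun m _ =>
        (measurable_pi_apply m).comp (measurable_pi_apply i))
    have hcs : ξn i l s = (fun v : Vt → ℕ → ℝ => lamg i l - ∑ m ∈ Icc l L, v i m) ∘ (a s) := rfl
    have hct : ξn i l t = (fun v : Vt → ℕ → ℝ => lamg i l - ∑ m ∈ Icc l L, v i m) ∘ (a t) := rfl
    have hind : IndepFun (ξn i l s) (ξn i l t) μ := by
      rw [hcs, hct]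
      exact (hiid.indepFun hst).comp hg hg
    have := IndepFun.integral_mul_eq_mul_integral hind (hint_ξn i l hl s).aestronglyMeasurable (hint_ξn i l hl t).aestronglyMeasurable
    calc ∫ ω, ξn i l s ω * ξn i l t ω ∂μ = ∫ ω, (ξn i l s * ξn i l t) ω ∂μ := rfl
      _ = (∫ ω, ξn i l s ω ∂μ) * ∫ ω, ξn i l t ω ∂μ := this
      _ = 0 := by rw [hmeann i l hl s, hmeann i l hl t]; ring
  -- pathwise drift inequality
  set x' : Vt → Vt → ℕ → ℝ := fun i j l => if (i, j) ∈ E then x i j l else 0 with hx'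
  have hdrift : ∀ t ω, SL (t+1) ω - SL t ω
      ≤ ((1+(n:ℝ)*(L:ℝ))*β^2 + 2*Vp*B1) + 2 * XX t ω := by
    intro t ω
    -- (a) destination queue quadratic bound
    have hq0 : Ud (t+1) ω^2 ≤ Ud t ω^2 + 2*Ud t ω*(γ*A t ω - νd t ω) + β^2 := by
      have h1 := lem_max_sq (Ud t ω + (γ*A t ω - νd t ω))
      have h2 : (γ*A t ω - νd t ω)^2 ≤ β^2 := by
        have := abs_le.mp (hδ0b t ω)
        exact sq_le_sq' (by linarith [this.1]) this.2
      calc Ud (t+1) ω^2 = (max 0 (Ud t ω + (γ*A t ω - νd t ω)))^2 := by rw [hUdrec' t ω]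
        _ ≤ (Ud t ω + (γ*A t ω - νd t ω))^2 := h1
        _ = Ud t ω^2 + 2*Ud t ω*(γ*A t ω - νd t ω) + (γ*A t ω - νd t ω)^2 := by ring
        _ ≤ Ud t ω^2 + 2*Ud t ω*(γ*A t ω - νd t ω) + β^2 := by linarith
    -- (b) node queue quadratic bounds
    have hqn : ∀ i ∈ univ.erase d, ∀ l ∈ Icc 1 L,
        Ui (t+1) ω i l^2 ≤ Ui t ω i l^2
          + 2*Ui t ω i l*(outν t ω i l - innν t ω i l - ag t ω i l) + β^2 := by
      intro i hi l hl
      have hid : i ≠ d := Finset.ne_of_mem_erase hi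
      have h1 := lem_max_sq (Ui t ω i l + (outν t ω i l - innν t ω i l - ag t ω i l))
      have h2 : (outν t ω i l - innν t ω i l - ag t ω i l)^2 ≤ β^2 := by
        have := abs_le.mp (hδnb t ω i hid l hl)
        exact sq_le_sq' (by linarith [this.1]) this.2
      calc Ui (t+1) ω i l^2
          = (max 0 (Ui t ω i l + (outν t ω i l - innν t ω i l - ag t ω i l)))^2 := by
            rw [hUirec' t ω i hid l hl]
        _ ≤ (Ui t ω i l + (outν t ω i l - innν t ω i l - ag t ω i l))^2 := h1
        _ = Ui t ω i l^2 + 2*Ui t ω i l*(outν t ω i l - innν t ω i l - ag t ω i l)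
            + (outν t ω i l - innν t ω i l - ag t ω i l)^2 := by ring
        _ ≤ _ := by linarith
    -- (c) summed quadratic bound
    have hsumq : SL (t+1) ω - SL t ω ≤ (1+(n:ℝ)*(L:ℝ))*β^2
        + 2*(Ud t ω*(γ*A t ω - νd t ω)
          + ∑ i ∈ univ.erase d, ∑ l ∈ Icc 1 L,
              Ui t ω i l*(outν t ω i l - innν t ω i l - ag t ω i l)) := by
      have hsn : ∑ i ∈ univ.erase d, ∑ l ∈ Icc 1 L, Ui (t+1) ω i l^2
          ≤ ∑ i ∈ univ.erase d, ∑ l ∈ Icc 1 L, (Ui t ω i l^2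
            + 2*Ui t ω i l*(outν t ω i l - innν t ω i l - ag t ω i l) + β^2) :=
        Finset.sum_le_sum fun i hi => Finset.sum_le_sum fun l hl => hqn i hi l hl
      have hexp : ∑ i ∈ univ.erase d, ∑ l ∈ Icc 1 L, (Ui t ω i l^2
            + 2*Ui t ω i l*(outν t ω i l - innν t ω i l - ag t ω i l) + β^2)
          = (∑ i ∈ univ.erase d, ∑ l ∈ Icc 1 L, Ui t ω i l^2)
            + (∑ i ∈ univ.erase d, ∑ l ∈ Icc 1 L,
                2*Ui t ω i l*(outν t ω i l - innν t ω i l - ag t ω i l))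
            + ((univ.erase d).card : ℝ) * ((L:ℝ) * β^2) := by
        have h1 : ∀ i : Vt, ∑ l ∈ Icc 1 L, (Ui t ω i l^2
              + 2*Ui t ω i l*(outν t ω i l - innν t ω i l - ag t ω i l) + β^2)
            = (∑ l ∈ Icc 1 L, Ui t ω i l^2)
              + (∑ l ∈ Icc 1 L, 2*Ui t ω i l*(outν t ω i l - innν t ω i l - ag t ω i l))
              + (L:ℝ)*β^2 := by
          intro i
          rw [Finset.sum_add_distrib, Finset.sum_add_distrib, Finset.sum_const,
            nsmul_eq_mul, hcard]
        rw [Finset.sum_congr rfl fun i _ => h1 i, Finset.sum_add_distrib,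
          Finset.sum_add_distrib, Finset.sum_const, nsmul_eq_mul]
      have hG : ∑ i ∈ univ.erase d, ∑ l ∈ Icc 1 L,
            2*Ui t ω i l*(outν t ω i l - innν t ω i l - ag t ω i l)
          = 2*∑ i ∈ univ.erase d, ∑ l ∈ Icc 1 L,
              Ui t ω i l*(outν t ω i l - innν t ω i l - ag t ω i l) := by
        rw [Finset.mul_sum]
        refine Finset.sum_congr rfl fun i _ => ?_
        rw [Finset.mul_sum]
        exact Finset.sum_congr rfl fun l _ => by ring
      have hcarderase : ((univ.erase d).card : ℝ) ≤ (n:ℝ) := by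
        have h := Finset.card_le_card (Finset.erase_subset d (univ : Finset Vt))
        calc ((univ.erase d).card : ℝ) ≤ (((univ : Finset Vt)).card : ℝ) := by exact_mod_cast h
          _ = (n:ℝ) := by rw [Finset.card_univ, hn]
      have hcard2 : ((univ.erase d).card : ℝ) * ((L:ℝ)*β^2) ≤ (n:ℝ) * ((L:ℝ)*β^2) :=
        mul_le_mul_of_nonneg_right hcarderase (by positivity)
      have hSLt : ∀ s : ℕ, SL s ω
          = Ud s ω^2 + ∑ i ∈ univ.erase d, ∑ l ∈ Icc 1 L, Ui s ω i l^2 := fun s => rfl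
      rw [hexp, hG] at hsn
      rw [hSLt (t+1), hSLt t]
      linarith only [hq0, hsn, hcard2]
    -- (d) rearrangement identity for the served flow
    have hbridge_in : ∀ i m', (∑ j, ν t ω j i m')
        = ∑ j ∈ univ.filter (fun j => (j, i) ∈ E), ν t ω j i m' := by
      intro i m'
      refine (Finset.sum_subset (Finset.filter_subset _ _) fun j _ hj => ?_).symm
      rw [Finset.mem_filter] at hj
      push_neg at hj
      exact hν0 t ω j i m' fun hcon => (hj (mem_univ j)) hcon.1
    have hbridge_out : ∀ i m', (∑ j, ν t ω i j m')
        = ∑ j ∈ univ.filter (fun j => (i, j) ∈ E), ν t ω i j m' := by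
      intro i m'
      refine (Finset.sum_subset (Finset.filter_subset _ _) fun j _ hj => ?_).symm
      rw [Finset.mem_filter] at hj
      push_neg at hj
      exact hν0 t ω i j m' fun hcon => (hj (mem_univ j)) hcon.1
    have hfdν : ∀ k, ∀ l ∈ Icc 1 L, ν t ω d k l = 0 := fun k l hl =>
      hν0 t ω d k l fun hcon => hcon.2.1 rfl
    have hidν := lem_flow_identity d L (fun i j l => ν t ω i j l)
      (fun i m => Ui t ω i m) (Ud t ω) hfdν
    have hWνeq : Ud t ω * νd t ω
        + ∑ i ∈ univ.erase d, ∑ l ∈ Icc 1 L, Ui t ω i l * (innν t ω i l - outν t ω i l)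
        = ∑ p ∈ E, ∑ l ∈ Icc 1 L,
            ν t ω p.1 p.2 l * (w t ω p.1 p.2 l + Vp * ecost p.1 p.2) := by
      have hL1 : ∑ i, ∑ j, ∑ l ∈ Icc 1 L, ν t ω i j l *
            ((if j = d then Ud t ω else ∑ m ∈ Icc 1 (l-1), Ui t ω j m)
              - ∑ m ∈ Icc 1 l, Ui t ω i m)
          = ∑ i, ∑ j, ∑ l ∈ Icc 1 L, ν t ω i j l * (w t ω i j l + Vp * ecost i j) := by
        refine Finset.sum_congr rfl fun i _ => Finset.sum_congr rfl fun j _ =>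
          Finset.sum_congr rfl fun l _ => ?_
        rw [hw t ω i j l]
        ring
      have hL2 : ∑ i, ∑ j, ∑ l ∈ Icc 1 L, ν t ω i j l * (w t ω i j l + Vp * ecost i j)
          = ∑ p ∈ E, ∑ l ∈ Icc 1 L,
              ν t ω p.1 p.2 l * (w t ω p.1 p.2 l + Vp * ecost p.1 p.2) := by
        rw [← Finset.sum_product']
        refine (Finset.sum_subset (fun p _ => Finset.mem_product.mpr
          ⟨mem_univ _, mem_univ _⟩) fun p _ hpE => ?_).symm
        refine Finset.sum_eq_zero fun l _ => ?_
        have h0 : ν t ω p.1 p.2 l = 0 := by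
          refine hν0 t ω p.1 p.2 l fun hcon => hpE ?_
          have := hcon.1
          rwa [Prod.mk.eta] at this
        rw [h0, zero_mul]
      have hR1 : Ud t ω * (∑ l ∈ Icc 1 L, ∑ j, ν t ω j d l) = Ud t ω * νd t ω := by
        congr 1
        exact Finset.sum_congr rfl fun l _ => hbridge_in d l
      have hR2 : ∑ i ∈ univ.erase d, ∑ m ∈ Icc 1 L, Ui t ω i m *
            ((∑ m' ∈ Icc (m+1) L, ∑ j, ν t ω j i m') - (∑ m' ∈ Icc m L, ∑ j, ν t ω i j m'))
          = ∑ i ∈ univ.erase d, ∑ l ∈ Icc 1 L, Ui t ω i l * (innν t ω i l - outν t ω i l) := by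
        refine Finset.sum_congr rfl fun i _ => Finset.sum_congr rfl fun m _ => ?_
        congr 1
        rw [Finset.sum_congr rfl fun m' _ => hbridge_in i m',
          Finset.sum_congr rfl fun m' _ => hbridge_out i m']
      rw [hL1, hL2] at hidν
      rw [← hR1, ← hR2, hidν]
    -- (e) rearrangement identity for the comparison flow x
    have hfdx : ∀ k, ∀ l ∈ Icc 1 L, x' d k l = 0 := by
      intro k l hl
      rw [hx']
      simp only []
      split_ifs with h
      · exact hxd k h l hl
      · rfl
    have hidx := lem_flow_identity d L x' (fun i m => Ui t ω i m) (Ud t ω) hfdx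
    have hWxeq : Ud t ω * xd
        + ∑ i ∈ univ.erase d, ∑ l ∈ Icc 1 L, Ui t ω i l * (innx i l - outx i l)
        = ∑ p ∈ E, ∑ l ∈ Icc 1 L,
            x p.1 p.2 l * (w t ω p.1 p.2 l + Vp * ecost p.1 p.2) := by
      have hL1 : ∑ i, ∑ j, ∑ l ∈ Icc 1 L, x' i j l *
            ((if j = d then Ud t ω else ∑ m ∈ Icc 1 (l-1), Ui t ω j m)
              - ∑ m ∈ Icc 1 l, Ui t ω i m)
          = ∑ i, ∑ j, ∑ l ∈ Icc 1 L, x' i j l * (w t ω i j l + Vp * ecost i j) := by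
        refine Finset.sum_congr rfl fun i _ => Finset.sum_congr rfl fun j _ =>
          Finset.sum_congr rfl fun l _ => ?_
        rw [hw t ω i j l]
        ring
      have hL2 : ∑ i, ∑ j, ∑ l ∈ Icc 1 L, x' i j l * (w t ω i j l + Vp * ecost i j)
          = ∑ p ∈ E, ∑ l ∈ Icc 1 L,
              x p.1 p.2 l * (w t ω p.1 p.2 l + Vp * ecost p.1 p.2) := by
        rw [← Finset.sum_product']
        rw [← Finset.sum_subset (fun p (hp : p ∈ E) => Finset.mem_product.mpr
          ⟨mem_univ p.1, mem_univ p.2⟩) (fun p _ hpE => Finset.sum_eq_zero fun l _ => ?_)]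
        · refine Finset.sum_congr rfl fun p hp => Finset.sum_congr rfl fun l _ => ?_
          have hx'eq : x' p.1 p.2 l = x p.1 p.2 l := by
            rw [hx']
            simp only []
            rw [if_pos (by rwa [Prod.mk.eta])]
          rw [hx'eq]
        · have hx'0 : x' p.1 p.2 l = 0 := by
            rw [hx']
            simp only []
            rw [if_neg (fun hcon => hpE (by rwa [Prod.mk.eta] at hcon))]
          rw [hx'0, zero_mul]
      have hR1 : Ud t ω * (∑ l ∈ Icc 1 L, ∑ j, x' j d l) = Ud t ω * xd := by
        congr 1
        rw [hxdv]
        refine Finset.sum_congr rfl fun l _ => ?_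
        rw [Finset.sum_filter]
      have hR2 : ∑ i ∈ univ.erase d, ∑ m ∈ Icc 1 L, Ui t ω i m *
            ((∑ m' ∈ Icc (m+1) L, ∑ j, x' j i m') - (∑ m' ∈ Icc m L, ∑ j, x' i j m'))
          = ∑ i ∈ univ.erase d, ∑ l ∈ Icc 1 L, Ui t ω i l * (innx i l - outx i l) := by
        refine Finset.sum_congr rfl fun i _ => Finset.sum_congr rfl fun m _ => ?_
        congr 1
        congr 1
        · rw [hinnx]
          simp only []
          refine Finset.sum_congr rfl fun m' _ => ?_
          rw [Finset.sum_filter]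
        · rw [houtx]
          simp only []
          refine Finset.sum_congr rfl fun m' _ => ?_
          rw [Finset.sum_filter]
      rw [hL1, hL2] at hidx
      rw [← hR1, ← hR2, hidx]
    -- (f) per-link max-weight comparison
    have hcomp : ∀ p ∈ E, ∑ l ∈ Icc 1 L, x p.1 p.2 l * w t ω p.1 p.2 l
        ≤ ∑ l ∈ Icc 1 L, ν t ω p.1 p.2 l * w t ω p.1 p.2 l := by
      intro p hp
      have hpE : (p.1, p.2) ∈ E := by rwa [Prod.mk.eta]
      by_cases hpd : p.1 = d
      · have hx0 : ∀ l ∈ Icc 1 L, x p.1 p.2 l = 0 := by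
          intro l hl
          have h := hxd p.2 (by rwa [hpd] at hpE) l hl
          rw [hpd]
          exact h
        have hν00 : ∀ l ∈ Icc 1 L, ν t ω p.1 p.2 l = 0 := fun l hl =>
          hν0 t ω p.1 p.2 l fun hcon => hcon.2.1 hpd
        rw [Finset.sum_eq_zero fun l hl => by rw [hx0 l hl, zero_mul],
          Finset.sum_eq_zero fun l hl => by rw [hν00 l hl, zero_mul]]
      · have hls := hlstar t ω p.1 p.2
        have hRHS : ∑ l ∈ Icc 1 L, ν t ω p.1 p.2 l * w t ω p.1 p.2 l
            = C p.1 p.2 * max 0 (w t ω p.1 p.2 (lstar t ω p.1 p.2)) := by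
          rw [Finset.sum_eq_single_of_mem (lstar t ω p.1 p.2) hls.1 (fun l hl hne => by
            rw [hνdef t ω p.1 p.2 hpE hpd l hl, if_neg (fun hcon => hne hcon.1), zero_mul])]
          rw [hνdef t ω p.1 p.2 hpE hpd _ hls.1]
          by_cases hw0 : 0 < w t ω p.1 p.2 (lstar t ω p.1 p.2)
          · rw [if_pos ⟨rfl, hw0⟩, max_eq_right (le_of_lt hw0)]
          · rw [if_neg (fun hcon => hw0 hcon.2), max_eq_left (not_lt.mp hw0), mul_zero,
              zero_mul]
        rw [hRHS]
        calc ∑ l ∈ Icc 1 L, x p.1 p.2 l * w t ω p.1 p.2 l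
            ≤ ∑ l ∈ Icc 1 L, x p.1 p.2 l * max 0 (w t ω p.1 p.2 (lstar t ω p.1 p.2)) := by
              refine Finset.sum_le_sum fun l hl => ?_
              exact mul_le_mul_of_nonneg_left
                (le_trans (hls.2 l hl) (le_max_right 0 _)) (hxnn p.1 p.2 hpE l hl)
          _ = (∑ l ∈ Icc 1 L, x p.1 p.2 l) * max 0 (w t ω p.1 p.2 (lstar t ω p.1 p.2)) :=
              (Finset.sum_mul _ _ _).symm
          _ ≤ C p.1 p.2 * max 0 (w t ω p.1 p.2 (lstar t ω p.1 p.2)) :=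
              mul_le_mul_of_nonneg_right (hxcap p hp) (le_max_left 0 _)
    -- (g) cost splits and bounds
    have hsplit : ∀ (g : Vt → Vt → ℕ → ℝ),
        ∑ p ∈ E, ∑ l ∈ Icc 1 L, g p.1 p.2 l * (w t ω p.1 p.2 l + Vp * ecost p.1 p.2)
          = (∑ p ∈ E, ∑ l ∈ Icc 1 L, g p.1 p.2 l * w t ω p.1 p.2 l)
            + Vp * ∑ p ∈ E, ecost p.1 p.2 * ∑ l ∈ Icc 1 L, g p.1 p.2 l := by
      intro g
      rw [Finset.mul_sum, ← Finset.sum_add_distrib]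
      refine Finset.sum_congr rfl fun p _ => ?_
      rw [Finset.mul_sum, Finset.mul_sum, ← Finset.sum_add_distrib]
      exact Finset.sum_congr rfl fun l _ => by ring
    have hνe_nn : 0 ≤ ∑ p ∈ E, ecost p.1 p.2 * ∑ l ∈ Icc 1 L, ν t ω p.1 p.2 l :=
      Finset.sum_nonneg fun p hp => mul_nonneg (hecost p hp).1
        (Finset.sum_nonneg fun l _ => hν0' t ω p.1 p.2 l)
    have hxe_le : ∑ p ∈ E, ecost p.1 p.2 * ∑ l ∈ Icc 1 L, x p.1 p.2 l ≤ B1 := by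
      rw [hB1def]
      refine lem_sum_le _ _ _ fun p hp => ?_
      have hpE : (p.1, p.2) ∈ E := by rwa [Prod.mk.eta]
      have hsx0 : 0 ≤ ∑ l ∈ Icc 1 L, x p.1 p.2 l :=
        Finset.sum_nonneg fun l hl => hxnn p.1 p.2 hpE l hl
      have hsxC : ∑ l ∈ Icc 1 L, x p.1 p.2 l ≤ Cmax := le_trans (hxcap p hp) (hC p hp).2
      calc ecost p.1 p.2 * ∑ l ∈ Icc 1 L, x p.1 p.2 l ≤ emax * Cmax :=
            mul_le_mul (hecost p hp).2 hsxC hsx0 hemax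
        _ = Cmax * emax := mul_comm _ _
    have hVp0 : (0:ℝ) ≤ Vp := by linarith only [hVp]
    -- (h) combination
    have hWνge : (Ud t ω * xd
          + ∑ i ∈ univ.erase d, ∑ l ∈ Icc 1 L, Ui t ω i l * (innx i l - outx i l))
          - Vp * B1
        ≤ ∑ p ∈ E, ∑ l ∈ Icc 1 L,
            ν t ω p.1 p.2 l * (w t ω p.1 p.2 l + Vp * ecost p.1 p.2) := by
      have h1 := hsplit (fun i j l => ν t ω i j l)
      have h2 := hsplit x
      have h3 : ∑ p ∈ E, ∑ l ∈ Icc 1 L, x p.1 p.2 l * w t ω p.1 p.2 l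
          ≤ ∑ p ∈ E, ∑ l ∈ Icc 1 L, ν t ω p.1 p.2 l * w t ω p.1 p.2 l :=
        Finset.sum_le_sum hcomp
      have h4 : 0 ≤ Vp * ∑ p ∈ E, ecost p.1 p.2 * ∑ l ∈ Icc 1 L, ν t ω p.1 p.2 l :=
        mul_nonneg hVp0 hνe_nn
      have h5 : Vp * (∑ p ∈ E, ecost p.1 p.2 * ∑ l ∈ Icc 1 L, x p.1 p.2 l) ≤ Vp * B1 :=
        mul_le_mul_of_nonneg_left hxe_le hVp0
      linarith only [h1, h2, h3, h4, h5, hWxeq]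
    have hpair : ∀ (F G : Vt → ℕ → ℝ),
        (∑ i ∈ univ.erase d, ∑ l ∈ Icc 1 L, F i l)
          + (∑ i ∈ univ.erase d, ∑ l ∈ Icc 1 L, G i l)
        = ∑ i ∈ univ.erase d, ∑ l ∈ Icc 1 L, (F i l + G i l) := by
      intro F G
      rw [← Finset.sum_add_distrib]
      exact Finset.sum_congr rfl fun i _ => (Finset.sum_add_distrib).symm
    have halg : (∑ i ∈ univ.erase d, ∑ l ∈ Icc 1 L, Ui t ω i l * (innν t ω i l - outν t ω i l))
          + (∑ i ∈ univ.erase d, ∑ l ∈ Icc 1 L,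
              Ui t ω i l * (outν t ω i l - innν t ω i l - ag t ω i l))
          + (∑ i ∈ univ.erase d, ∑ l ∈ Icc 1 L, Ui t ω i l * ag t ω i l) = 0 := by
      rw [hpair, hpair]
      exact Finset.sum_eq_zero fun i _ => Finset.sum_eq_zero fun l _ => by ring
    have halgx : (∑ i ∈ univ.erase d, ∑ l ∈ Icc 1 L, Ui t ω i l * (innx i l - outx i l))
          + (∑ i ∈ univ.erase d, ∑ l ∈ Icc 1 L,
              Ui t ω i l * (outx i l - innx i l - ag t ω i l))
          + (∑ i ∈ univ.erase d, ∑ l ∈ Icc 1 L, Ui t ω i l * ag t ω i l) = 0 := by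
      rw [hpair, hpair]
      exact Finset.sum_eq_zero fun i _ => Finset.sum_eq_zero fun l _ => by ring
    have hslackd : γ*Λ - xd ≤ -ε := by linarith only [hxsd]
    have hxsi' : ∀ i, i ≠ d → ∀ l ∈ Icc 1 L, outx i l + ε ≤ innx i l + lamg i l := by
      intro i hi l hl
      exact hxsi i hi l hl
    have hs1 : Ud t ω * (γ*A t ω - xd) ≤ Ud t ω * ξ0 t ω := by
      have hξeq : ξ0 t ω = γ * (A t ω - Λ) := rfl
      have hnp : Ud t ω * (γ*Λ - xd) ≤ 0 :=
        mul_nonpos_of_nonneg_of_nonpos (hUdnn t ω) (by linarith only [hslackd, hε])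
      have hexp2 : Ud t ω * (γ*A t ω - xd)
          = Ud t ω * ξ0 t ω + Ud t ω * (γ*Λ - xd) := by rw [hξeq]; ring
      linarith only [hnp, hexp2]
    have hs2 : ∑ i ∈ univ.erase d, ∑ l ∈ Icc 1 L,
          Ui t ω i l * (outx i l - innx i l - ag t ω i l)
        ≤ ∑ i ∈ univ.erase d, ∑ l ∈ Icc 1 L, Ui t ω i l * ξn i l t ω := by
      refine Finset.sum_le_sum fun i hi => Finset.sum_le_sum fun l hl => ?_
      have hid : i ≠ d := Finset.ne_of_mem_erase hi
      have hξeq : ξn i l t ω = lamg i l - ag t ω i l := rfl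
      have hnp : Ui t ω i l * (outx i l - innx i l - lamg i l) ≤ 0 :=
        mul_nonpos_of_nonneg_of_nonpos (hUinn t ω i hid l hl)
          (by linarith only [hxsi' i hid l hl, hε])
      have hexp2 : Ui t ω i l * (outx i l - innx i l - ag t ω i l)
          = Ui t ω i l * ξn i l t ω + Ui t ω i l * (outx i l - innx i l - lamg i l) := by
        rw [hξeq]; ring
      linarith only [hnp, hexp2]
    have hXXeq : XX t ω = Ud t ω * ξ0 t ω
        + ∑ i ∈ univ.erase d, ∑ l ∈ Icc 1 L, Ui t ω i l * ξn i l t ω := rfl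
    have key : Ud t ω * (γ*A t ω - νd t ω)
        + ∑ i ∈ univ.erase d, ∑ l ∈ Icc 1 L,
            Ui t ω i l * (outν t ω i l - innν t ω i l - ag t ω i l)
        ≤ Vp*B1 + XX t ω := by
      linarith only [hWνeq, hWνge, halg, halgx, hs1, hs2, hXXeq]
    linarith only [hsumq, key]
  -- queue value bounds (for integrability)
  have hqb : ∀ t ω, |Ud t ω| ≤ (t:ℝ)*β := by
    intro t
    induction t with
    | zero => intro ω; rw [(hU0 ω).1]; simp
    | succ t ih =>
      intro ω
      have h3 : Ud (t+1) ω = Ud t ω + (Ud (t+1) ω - Ud t ω) := by ring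
      rw [h3]
      refine le_trans (abs_add_le _ _) ?_
      push_cast
      linarith only [ih ω, hstepUd t ω]
  have hqbUi : ∀ t ω i, i ≠ d → ∀ l ∈ Icc 1 L, |Ui t ω i l| ≤ (t:ℝ)*β := by
    intro t
    induction t with
    | zero => intro ω i _ l _; rw [(hU0 ω).2 i l]; simp
    | succ t ih =>
      intro ω i hi l hl
      have h3 : Ui (t+1) ω i l = Ui t ω i l + (Ui (t+1) ω i l - Ui t ω i l) := by ring
      rw [h3]
      refine le_trans (abs_add_le _ _) ?_
      push_cast
      linarith only [ih ω i hi l hl, hstepUi t ω i hi l hl]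
  have hcarderase : ((univ.erase d).card : ℝ) ≤ (n:ℝ) := by
    have h := Finset.card_le_card (Finset.erase_subset d (univ : Finset Vt))
    calc ((univ.erase d).card : ℝ) ≤ (((univ : Finset Vt)).card : ℝ) := by exact_mod_cast h
      _ = (n:ℝ) := by rw [Finset.card_univ, hn]
  -- telescoping the drift
  have hSL0 : ∀ ω, SL 0 ω = 0 := by
    intro ω
    have h : SL 0 ω = Ud 0 ω^2 + ∑ i ∈ univ.erase d, ∑ l ∈ Icc 1 L, Ui 0 ω i l^2 := rfl
    rw [h, (hU0 ω).1,
      Finset.sum_eq_zero fun i _ => Finset.sum_eq_zero fun l _ => by rw [(hU0 ω).2 i l]; ring]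
    ring
  have htel : ∀ (S : ℕ) (ω : Ω), SL S ω
      ≤ (S:ℝ)*((1+(n:ℝ)*(L:ℝ))*β^2 + 2*Vp*B1) + 2*∑ t ∈ range S, XX t ω := by
    intro S
    induction S with
    | zero => intro ω; rw [hSL0 ω]; simp
    | succ S ih =>
      intro ω
      have h := hdrift S ω
      rw [Finset.sum_range_succ]
      push_cast
      linarith only [h, ih ω]
  -- integrability facts
  have hmeasXX : ∀ t, Measurable (XX t) := by
    intro t
    have h : XX t = fun ω => Ud t ω * ξ0 t ω
        + ∑ i ∈ univ.erase d, ∑ l ∈ Icc 1 L, Ui t ω i l * ξn i l t ω := rfl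
    rw [h]
    exact ((hUdm t).mul (hξ0meas t)).add (Finset.measurable_sum _ fun i _ =>
      Finset.measurable_sum _ fun l _ => (hmUi t i l).mul (hξnmeas i l t))
  have hXXb : ∀ t ω, |XX t ω| ≤ (1+(n:ℝ)*(L:ℝ))*((t:ℝ)*β*β) := by
    intro t ω
    have htβ : (0:ℝ) ≤ (t:ℝ)*β := by positivity
    have h0 : XX t ω = Ud t ω * ξ0 t ω
        + ∑ i ∈ univ.erase d, ∑ l ∈ Icc 1 L, Ui t ω i l * ξn i l t ω := rfl
    have h1 : |Ud t ω * ξ0 t ω| ≤ (t:ℝ)*β*β := by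
      rw [abs_mul]
      exact mul_le_mul (hqb t ω) (hξ0b t ω) (abs_nonneg _) htβ
    have h2 : |∑ i ∈ univ.erase d, ∑ l ∈ Icc 1 L, Ui t ω i l * ξn i l t ω|
        ≤ ((univ.erase d).card : ℝ) * ((L:ℝ)*((t:ℝ)*β*β)) := by
      refine le_trans (Finset.abs_sum_le_sum_abs _ _) ?_
      refine lem_sum_le _ _ _ fun i hi => ?_
      refine le_trans (Finset.abs_sum_le_sum_abs _ _) ?_
      have hb : ∀ l ∈ Icc 1 L, |Ui t ω i l * ξn i l t ω| ≤ (t:ℝ)*β*β := by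
        intro l hl
        rw [abs_mul]
        exact mul_le_mul (hqbUi t ω i (Finset.ne_of_mem_erase hi) l hl)
          (hξnb i l hl t ω) (abs_nonneg _) htβ
      calc ∑ l ∈ Icc 1 L, |Ui t ω i l * ξn i l t ω|
          ≤ ((Icc 1 L).card : ℝ) * ((t:ℝ)*β*β) := lem_sum_le _ _ _ hb
        _ = (L:ℝ)*((t:ℝ)*β*β) := by rw [hcard]
    have h3 : ((univ.erase d).card : ℝ) * ((L:ℝ)*((t:ℝ)*β*β))
        ≤ (n:ℝ) * ((L:ℝ)*((t:ℝ)*β*β)) :=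
      mul_le_mul_of_nonneg_right hcarderase (by positivity)
    rw [h0]
    refine le_trans (abs_add_le _ _) ?_
    have : (1+(n:ℝ)*(L:ℝ))*((t:ℝ)*β*β) = (t:ℝ)*β*β + (n:ℝ)*((L:ℝ)*((t:ℝ)*β*β)) := by ring
    rw [this]
    linarith only [h1, h2, h3]
  have hint_XX : ∀ t, Integrable (XX t) μ := fun t =>
    lem_integrable_of_bounded μ _ _ (hmeasXX t) (hXXb t)
  have hint_sumXX : Integrable (fun ω => ∑ t ∈ range T, XX t ω) μ :=
    integrable_finset_sum _ fun t _ => hint_XX t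
  have hint_Ud : ∀ t, Integrable (fun ω => Ud t ω) μ := fun t =>
    lem_integrable_of_bounded μ _ ((t:ℝ)*β) (hUdm t) (hqb t)
  have hint_Ud2 : Integrable (fun ω => Ud T ω^2) μ := by
    refine lem_integrable_of_bounded μ _ (((T:ℝ)*β)^2) ((hUdm T).pow measurable_const) ?_
    intro ω
    rw [abs_pow]
    exact pow_le_pow_left₀ (abs_nonneg _) (hqb T ω) 2
  have hint_SL : Integrable (SL T) μ := by
    have hm : Measurable (SL T) := by
      have h : SL T = fun ω => Ud T ω^2
          + ∑ i ∈ univ.erase d, ∑ l ∈ Icc 1 L, Ui T ω i l^2 := rfl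
      rw [h]
      exact ((hUdm T).pow measurable_const).add (Finset.measurable_sum _ fun i _ =>
        Finset.measurable_sum _ fun l _ => (hmUi T i l).pow measurable_const)
    refine lem_integrable_of_bounded μ _ ((((T:ℝ)*β)^2) + (n:ℝ)*((L:ℝ)*((T:ℝ)*β)^2)) hm ?_
    intro ω
    have h0 : SL T ω = Ud T ω^2
        + ∑ i ∈ univ.erase d, ∑ l ∈ Icc 1 L, Ui T ω i l^2 := rfl
    have h1 : Ud T ω^2 ≤ ((T:ℝ)*β)^2 := by
      rw [← sq_abs]
      exact pow_le_pow_left₀ (abs_nonneg _) (hqb T ω) 2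
    have h2 : ∑ i ∈ univ.erase d, ∑ l ∈ Icc 1 L, Ui T ω i l^2
        ≤ ((univ.erase d).card : ℝ) * ((L:ℝ)*((T:ℝ)*β)^2) := by
      refine lem_sum_le _ _ _ fun i hi => ?_
      have hb : ∀ l ∈ Icc 1 L, Ui T ω i l^2 ≤ ((T:ℝ)*β)^2 := by
        intro l hl
        rw [← sq_abs]
        exact pow_le_pow_left₀ (abs_nonneg _) (hqbUi T ω i (Finset.ne_of_mem_erase hi) l hl) 2
      calc ∑ l ∈ Icc 1 L, Ui T ω i l^2
          ≤ ((Icc 1 L).card : ℝ) * ((T:ℝ)*β)^2 := lem_sum_le _ _ _ hb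
        _ = (L:ℝ)*((T:ℝ)*β)^2 := by rw [hcard]
    have h3 : ((univ.erase d).card : ℝ) * ((L:ℝ)*((T:ℝ)*β)^2)
        ≤ (n:ℝ)*((L:ℝ)*((T:ℝ)*β)^2) :=
      mul_le_mul_of_nonneg_right hcarderase (by positivity)
    have h4 : 0 ≤ Ud T ω^2 := sq_nonneg _
    have h5 : 0 ≤ ∑ i ∈ univ.erase d, ∑ l ∈ Icc 1 L, Ui T ω i l^2 :=
      Finset.sum_nonneg fun i _ => Finset.sum_nonneg fun l _ => sq_nonneg _
    rw [abs_le]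
    constructor
    · have : (0:ℝ) ≤ ((T:ℝ)*β)^2 + (n:ℝ)*((L:ℝ)*((T:ℝ)*β)^2) := by positivity
      linarith only [h0, h4, h5, this]
    · linarith only [h0, h1, h2, h3]
  -- expectation of the cross terms
  have hsqT0 : (0:ℝ) ≤ Real.sqrt T := Real.sqrt_nonneg _
  have hcross0 : ∫ ω, (∑ t ∈ range T, Ud t ω * ξ0 t ω) ∂μ
      ≤ (T:ℝ)*(β*(β+1))*Real.sqrt T :=
    lem_cross μ (fun t ω => Ud t ω) ξ0 β hβ0 hUdm hξ0meas (fun ω => (hU0 ω).1)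
      hstepUd hξ0b horth0 T hTnat1
  have hcrossn : ∀ i ∈ univ.erase d, ∀ l ∈ Icc 1 L,
      ∫ ω, (∑ t ∈ range T, Ui t ω i l * ξn i l t ω) ∂μ
        ≤ (T:ℝ)*(β*(β+1))*Real.sqrt T := by
    intro i hi l hl
    exact lem_cross μ (fun t ω => Ui t ω i l) (ξn i l) β hβ0 (fun t => hmUi t i l)
      (fun t => hξnmeas i l t) (fun ω => (hU0 ω).2 i l)
      (fun t ω => hstepUi t ω i (Finset.ne_of_mem_erase hi) l hl)
      (hξnb i l hl) (horthn i l hl) T hTnat1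
  have hint_cr0 : ∀ t, Integrable (fun ω => Ud t ω * ξ0 t ω) μ := by
    intro t
    refine lem_integrable_of_bounded μ _ (((t:ℝ)*β)*β) ((hUdm t).mul (hξ0meas t)) fun ω => ?_
    rw [abs_mul]
    exact mul_le_mul (hqb t ω) (hξ0b t ω) (abs_nonneg _) (by positivity)
  have hint_crn : ∀ i, i ≠ d → ∀ l ∈ Icc 1 L, ∀ t,
      Integrable (fun ω => Ui t ω i l * ξn i l t ω) μ := by
    intro i hi l hl t
    refine lem_integrable_of_bounded μ _ (((t:ℝ)*β)*β)
      ((hmUi t i l).mul (hξnmeas i l t)) fun ω => ?_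
    rw [abs_mul]
    exact mul_le_mul (hqbUi t ω i hi l hl) (hξnb i l hl t ω) (abs_nonneg _) (by positivity)
  have hXsum : ∫ ω, (∑ t ∈ range T, XX t ω) ∂μ ≤ K * ((T:ℝ)*Real.sqrt T) := by
    have hre : ∀ ω, ∑ t ∈ range T, XX t ω
        = (∑ t ∈ range T, Ud t ω * ξ0 t ω)
          + ∑ i ∈ univ.erase d, ∑ l ∈ Icc 1 L, ∑ t ∈ range T, Ui t ω i l * ξn i l t ω := by
      intro ω
      have h1 : ∀ t, XX t ω = Ud t ω * ξ0 t ω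
          + ∑ i ∈ univ.erase d, ∑ l ∈ Icc 1 L, Ui t ω i l * ξn i l t ω := fun t => rfl
      rw [Finset.sum_congr rfl fun t _ => h1 t, Finset.sum_add_distrib]
      congr 1
      rw [Finset.sum_comm]
      exact Finset.sum_congr rfl fun i _ => Finset.sum_comm
    rw [show (fun ω => ∑ t ∈ range T, XX t ω)
      = fun ω => (∑ t ∈ range T, Ud t ω * ξ0 t ω)
          + ∑ i ∈ univ.erase d, ∑ l ∈ Icc 1 L, ∑ t ∈ range T, Ui t ω i l * ξn i l t ω
      from funext hre]
    rw [integral_add (integrable_finset_sum _ fun t _ => hint_cr0 t)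
      (integrable_finset_sum _ fun i hi => integrable_finset_sum _ fun l hl =>
        integrable_finset_sum _ fun t _ =>
          hint_crn i (Finset.ne_of_mem_erase hi) l hl t)]
    have h2 : ∫ ω, (∑ i ∈ univ.erase d, ∑ l ∈ Icc 1 L,
          ∑ t ∈ range T, Ui t ω i l * ξn i l t ω) ∂μ
        ≤ ((univ.erase d).card : ℝ) * ((L:ℝ) * ((T:ℝ)*(β*(β+1))*Real.sqrt T)) := by
      rw [integral_finset_sum _ fun i hi => integrable_finset_sum _ fun l hl =>
        integrable_finset_sum _ fun t _ => hint_crn i (Finset.ne_of_mem_erase hi) l hl t]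
      refine lem_sum_le _ _ _ fun i hi => ?_
      rw [integral_finset_sum _ fun l hl => integrable_finset_sum _ fun t _ =>
        hint_crn i (Finset.ne_of_mem_erase hi) l hl t]
      have := lem_sum_le (Icc 1 L)
        (fun l => ∫ ω, (∑ t ∈ range T, Ui t ω i l * ξn i l t ω) ∂μ)
        ((T:ℝ)*(β*(β+1))*Real.sqrt T) (fun l hl => hcrossn i hi l hl)
      calc ∑ l ∈ Icc 1 L, ∫ ω, (∑ t ∈ range T, Ui t ω i l * ξn i l t ω) ∂μ
          ≤ ((Icc 1 L).card : ℝ) * ((T:ℝ)*(β*(β+1))*Real.sqrt T) := this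
        _ = (L:ℝ) * ((T:ℝ)*(β*(β+1))*Real.sqrt T) := by rw [hcard]
    have h3 : ((univ.erase d).card : ℝ) * ((L:ℝ) * ((T:ℝ)*(β*(β+1))*Real.sqrt T))
        ≤ (n:ℝ) * ((L:ℝ) * ((T:ℝ)*(β*(β+1))*Real.sqrt T)) :=
      mul_le_mul_of_nonneg_right hcarderase (by positivity)
    have hKexp : K * ((T:ℝ)*Real.sqrt T)
        = (T:ℝ)*(β*(β+1))*Real.sqrt T
          + (n:ℝ) * ((L:ℝ) * ((T:ℝ)*(β*(β+1))*Real.sqrt T)) := by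
      rw [hKdef]; ring
    rw [hKexp]
    linarith only [hcross0, h2, h3]
  -- Lyapunov expectation bound
  have hESL : ∫ ω, Ud T ω^2 ∂μ
      ≤ (T:ℝ)*((1+(n:ℝ)*(L:ℝ))*β^2 + 2*Vp*B1) + 2*(K*((T:ℝ)*Real.sqrt T)) := by
    have h1 : ∀ ω, Ud T ω^2 ≤ SL T ω := by
      intro ω
      have h0 : SL T ω = Ud T ω^2
          + ∑ i ∈ univ.erase d, ∑ l ∈ Icc 1 L, Ui T ω i l^2 := rfl
      have h5 : 0 ≤ ∑ i ∈ univ.erase d, ∑ l ∈ Icc 1 L, Ui T ω i l^2 :=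
        Finset.sum_nonneg fun i _ => Finset.sum_nonneg fun l _ => sq_nonneg _
      linarith only [h0, h5]
    have h2 : ∫ ω, SL T ω ∂μ ≤ ∫ ω, ((T:ℝ)*((1+(n:ℝ)*(L:ℝ))*β^2 + 2*Vp*B1)
        + 2*∑ t ∈ range T, XX t ω) ∂μ := by
      refine integral_mono hint_SL ?_ (htel T)
      exact (integrable_const _).add (hint_sumXX.const_mul 2)
    rw [integral_add (integrable_const _) (hint_sumXX.const_mul 2), integral_const,
      integral_const_mul] at h2
    have h2' : ∫ ω, SL T ω ∂μ ≤ (T:ℝ)*((1+(n:ℝ)*(L:ℝ))*β^2 + 2*Vp*B1)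
        + 2*∫ ω, (∑ t ∈ range T, XX t ω) ∂μ := by
      refine le_trans h2 ?_
      simp
    calc ∫ ω, Ud T ω^2 ∂μ ≤ ∫ ω, SL T ω ∂μ := integral_mono hint_Ud2 hint_SL h1
      _ ≤ _ := by linarith only [h2', hXsum]
  -- arithmetic: the horizon is long enough
  have hVp0 : (0:ℝ) ≤ Vp := by linarith only [hVp]
  have hc2 : (2*B2/ε'^2)*Vp ≤ (T:ℝ) := by
    have h0 : 0 ≤ ((4*K/ε'^2+1)^2)*Vp := mul_nonneg (sq_nonneg _) hVp0
    have h1 : 0 ≤ 1*Vp := by linarith only [hVp]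
    linarith only [hTc, h0, h1]
  have hVpB2 : Vp*B2 ≤ ε'^2*(T:ℝ)/2 := by
    have h := mul_le_mul_of_nonneg_right hc2 (show (0:ℝ) ≤ ε'^2/2 by positivity)
    have heq : (2*B2/ε'^2)*Vp*(ε'^2/2) = Vp*B2 := by field_simp
    rw [heq] at h
    linarith only [h]
  have hB2v : (1+(n:ℝ)*(L:ℝ))*β^2 + 2*Vp*B1 ≤ Vp*B2 := by
    have h1 : (1+(n:ℝ)*(L:ℝ))*β^2 ≤ Vp*((1+(n:ℝ)*(L:ℝ))*β^2) :=
      le_mul_of_one_le_left (by positivity) hVp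
    have h2 : Vp*B2 = Vp*((1+(n:ℝ)*(L:ℝ))*β^2) + 2*Vp*B1 := by rw [hB2def]; ring
    linarith only [h1, h2]
  have hsqTle : 4*K/ε'^2 + 1 ≤ Real.sqrt T := by
    have hx0 : (0:ℝ) ≤ 4*K/ε'^2 + 1 := by positivity
    rw [show (4*K/ε'^2 + 1 : ℝ) = Real.sqrt ((4*K/ε'^2 + 1)^2) by
      rw [Real.sqrt_sq hx0]]
    refine Real.sqrt_le_sqrt ?_
    have h1 : ((4*K/ε'^2+1)^2)*1 ≤ ((4*K/ε'^2+1)^2)*Vp :=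
      mul_le_mul_of_nonneg_left hVp (sq_nonneg _)
    have h0 : 0 ≤ (2*B2/ε'^2)*Vp := mul_nonneg (by positivity) hVp0
    have h2 : 0 ≤ 1*Vp := by linarith only [hVp]
    linarith only [hTc, h0, h1, h2]
  have h4K : 4*K ≤ ε'^2 * Real.sqrt T := by
    have h := mul_le_mul_of_nonneg_left hsqTle (show (0:ℝ) ≤ ε'^2 by positivity)
    have heq : ε'^2*(4*K/ε'^2 + 1) = 4*K + ε'^2 := by field_simp
    rw [heq] at h
    have : (0:ℝ) ≤ ε'^2 := by positivity
    linarith only [h, this]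
  have hsqmul : Real.sqrt T * Real.sqrt T = (T:ℝ) := Real.mul_self_sqrt (by positivity)
  have hKT : 2*(K*((T:ℝ)*Real.sqrt T)) ≤ ε'^2*(T:ℝ)^2/2 := by
    have h := mul_le_mul_of_nonneg_right h4K
      (show (0:ℝ) ≤ (T:ℝ)*Real.sqrt T/2 by positivity)
    calc 2*(K*((T:ℝ)*Real.sqrt T)) = 4*K*((T:ℝ)*Real.sqrt T/2) := by ring
      _ ≤ ε'^2*Real.sqrt T*((T:ℝ)*Real.sqrt T/2) := h
      _ = ε'^2*((T:ℝ)*(Real.sqrt T*Real.sqrt T))/2 := by ring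
      _ = ε'^2*(T:ℝ)^2/2 := by rw [hsqmul]; ring
  have hM : ∫ ω, Ud T ω^2 ∂μ ≤ (ε'*(T:ℝ))^2 := by
    have h1 : (T:ℝ)*((1+(n:ℝ)*(L:ℝ))*β^2 + 2*Vp*B1) ≤ (T:ℝ)*(Vp*B2) :=
      mul_le_mul_of_nonneg_left hB2v (by positivity)
    have h2 : (T:ℝ)*(Vp*B2) ≤ (T:ℝ)*(ε'^2*(T:ℝ)/2) :=
      mul_le_mul_of_nonneg_left hVpB2 (by positivity)
    calc ∫ ω, Ud T ω^2 ∂μ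
        ≤ (T:ℝ)*((1+(n:ℝ)*(L:ℝ))*β^2 + 2*Vp*B1) + 2*(K*((T:ℝ)*Real.sqrt T)) := hESL
      _ ≤ (T:ℝ)*(Vp*B2) + 2*(K*((T:ℝ)*Real.sqrt T)) := by linarith only [h1]
      _ ≤ (T:ℝ)*(ε'^2*(T:ℝ)/2) + ε'^2*(T:ℝ)^2/2 := by linarith only [h2, hKT]
      _ = (ε'*(T:ℝ))^2 := by ring
  -- expected terminal queue is small
  have hEUd : ∫ ω, Ud T ω ∂μ ≤ ε'*(T:ℝ) := by
    have hr : 0 < ε'*(T:ℝ) := by positivity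
    have h1 : ∀ ω, Ud T ω ≤ (Ud T ω^2/(ε'*(T:ℝ)) + ε'*(T:ℝ))/2 := fun ω =>
      le_trans (le_abs_self _) (lem_abs_le_quad _ _ hr)
    have h2 : ∫ ω, Ud T ω ∂μ
        ≤ ∫ ω, ((Ud T ω^2/(ε'*(T:ℝ)) + ε'*(T:ℝ))/2) ∂μ := by
      refine integral_mono (hint_Ud T) ?_ h1
      exact (((hint_Ud2).div_const _).add (integrable_const _)).div_const 2
    have h3 : ∫ ω, ((Ud T ω^2/(ε'*(T:ℝ)) + ε'*(T:ℝ))/2) ∂μ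
        = ((∫ ω, Ud T ω^2 ∂μ)/(ε'*(T:ℝ)) + ε'*(T:ℝ))/2 := by
      rw [integral_div, integral_add ((hint_Ud2).div_const _) (integrable_const _),
        integral_div, integral_const]
      simp
    have h4 : (∫ ω, Ud T ω^2 ∂μ)/(ε'*(T:ℝ)) ≤ ε'*(T:ℝ) := by
      rw [div_le_iff₀ hr]
      calc ∫ ω, Ud T ω^2 ∂μ ≤ (ε'*(T:ℝ))^2 := hM
        _ = ε'*(T:ℝ)*(ε'*(T:ℝ)) := by ring
    rw [h3] at h2
    linarith only [h2, h4]
  -- pathwise throughput lower bound and conclusion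
  have hlow : ∀ (S : ℕ) (ω : Ω),
      γ*(∑ t ∈ range S, A t ω) - Ud S ω ≤ ∑ t ∈ range S, νd t ω := by
    intro S
    induction S with
    | zero => intro ω; rw [(hU0 ω).1]; simp
    | succ S ih =>
      intro ω
      have h2 : Ud S ω + (γ*A S ω - νd S ω) ≤ Ud (S+1) ω := by
        rw [hUdrec' S ω]; exact le_max_right _ _
      rw [Finset.sum_range_succ, Finset.sum_range_succ]
      have hγd : γ*(∑ t ∈ range S, A t ω + A S ω)
          = γ*(∑ t ∈ range S, A t ω) + γ*A S ω := by ring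
      rw [hγd]
      linarith only [ih ω, h2]
  have hint_νd : ∀ t, Integrable (fun ω => νd t ω) μ := by
    intro t
    refine lem_integrable_of_bounded μ _ ((n:ℝ)*(L:ℝ)*Cmax) ?_ fun ω => ?_
    · exact Finset.measurable_sum _ fun l _ => Finset.measurable_sum _ fun j _ => hmν t j d l
    · rw [abs_le]
      exact ⟨by linarith only [(hνdb t ω).1, (hνdb t ω).2, hnLC0], (hνdb t ω).2⟩
  have hEνd : (γ*Λ)*(T:ℝ) - ε'*(T:ℝ) ≤ ∑ t ∈ range T, ∫ ω, νd t ω ∂μ := by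
    have hintL : Integrable (fun ω => γ*(∑ t ∈ range T, A t ω) - Ud T ω) μ :=
      (((integrable_finset_sum (range T) fun t _ => hint_A t).const_mul γ)).sub (hint_Ud T)
    have h1 : ∫ ω, (γ*(∑ t ∈ range T, A t ω) - Ud T ω) ∂μ
        ≤ ∫ ω, (∑ t ∈ range T, νd t ω) ∂μ := by
      refine integral_mono hintL (integrable_finset_sum _ fun t _ => hint_νd t) ?_
      exact fun ω => hlow T ω
    have h2 : ∫ ω, (γ*(∑ t ∈ range T, A t ω) - Ud T ω) ∂μ
        = γ*((T:ℝ)*Λ) - ∫ ω, Ud T ω ∂μ := by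
      rw [integral_sub ((integrable_finset_sum (range T) fun t _ => hint_A t).const_mul γ)
        (hint_Ud T), integral_const_mul,
        integral_finset_sum _ fun t _ => hint_A t]
      congr 2
      rw [Finset.sum_congr rfl fun t _ => hAint t, Finset.sum_const, card_range,
        nsmul_eq_mul]
    have h3 : ∫ ω, (∑ t ∈ range T, νd t ω) ∂μ = ∑ t ∈ range T, ∫ ω, νd t ω ∂μ :=
      integral_finset_sum _ fun t _ => hint_νd t
    rw [h2, h3] at h1
    have h4 : (γ*Λ)*(T:ℝ) = γ*((T:ℝ)*Λ) := by ring
    linarith only [h1, hEUd, h4]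
  have hgoaleq : (∑ t ∈ range T, ∫ ω,
        (∑ l ∈ Icc 1 L, ∑ j ∈ univ.filter (fun j => (j, d) ∈ E), ν t ω j d l) ∂μ)
      = ∑ t ∈ range T, ∫ ω, νd t ω ∂μ := rfl
  rw [hgoaleq, le_div_iff₀ hTpos]
  have : (γ*Λ - ε')*(T:ℝ) = (γ*Λ)*(T:ℝ) - ε'*(T:ℝ) := by ring
  linarith only [hEνd, this]
end
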